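/- arXiv:math/0406370 — 4 statements merged into one kernel-verified Lean document; each statement's English description precedes it below -/
import Mathlib

section
/- Let 𝒮 be a fine, measurable, λ-Morse cover of an open set Ω ⊆ X. If 𝒮 consists of closed sets, or if for each S ∈ 𝒮 one has μ(Ω ∩ (cl(S) \ S)) = 0 (where cl(S) is the closure of S), then 𝒮 is a μ-a.e. λ-Morse cover of Ω. -/
/-!
The heart of the proof is a Besicovitch-type selection for Morse sets. Inside an open set `V` of
finite measure, take a compact `K` carrying half of `μ V` and pick points of `K` greedily, each time
one whose Morse set has nearly maximal radius among the points not yet covered; finitely many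
steps cover half of `μ K`. In this greedy order a set meets only boundedly many earlier ones, with a
bound depending on `λ` and `X` alone: the nearby ones have well-separated tags, so a packing
argument bounds them, and the far ones have well-separated directions, because two far sets in
nearly the same direction have tags at increasing distance (otherwise the starlikeness of the
earlier set would put the later tag inside it). Colouring greedily with boundedly many colours,
one colour class is a disjoint family carrying a fixed fraction `1 / C` of `μ V`.

Iterating, remove from `U` the closures of the selected sets: what is left is open, so the
selection applies again, and in each window of finite measure the remainder loses a factor
`1 - 1 / C` of its measure infinitely often. A point never covered therefore lies in a null
remainder or in `closure S \ S` for some selected `S`, which is null by hypothesis.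
-/

open MeasureTheory Set Metric Filter

/-- `S` is a `λ`-Morse set with tag `a`: for some `r > 0`, `B(a,r) ⊆ S ⊆ B(a,λr)`
(closed balls) and `S` is starlike with respect to `B(a,r)`. -/
def IsMorseSet {X : Type*} [NormedAddCommGroup X] [NormedSpace ℝ X]
    (lam : ℝ) (a : X) (S : Set X) : Prop :=
  ∃ r > (0:ℝ), Metric.closedBall a r ⊆ S ∧ S ⊆ Metric.closedBall a (lam * r) ∧
    ∀ y ∈ Metric.closedBall a r, ∀ x ∈ S, segment ℝ y x ⊆ S

/-- `𝒮` (a collection of tagged sets) is a fine, measurable, `λ`-Morse cover of `Ω`: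
every member is a measurable λ-Morse subset of `Ω` with the indicated tag, and every point
of `Ω` is the tag of sets of `𝒮` of arbitrarily small diameter. -/
def IsFineMorseCover {X : Type*} [NormedAddCommGroup X] [NormedSpace ℝ X] [MeasurableSpace X]
    (lam : ℝ) (Ω : Set X) (𝒮 : Set (X × Set X)) : Prop :=
  (∀ p ∈ 𝒮, IsMorseSet lam p.1 p.2 ∧ MeasurableSet p.2 ∧ p.2 ⊆ Ω) ∧
  ∀ a ∈ Ω, ∀ ε > (0:ℝ), ∃ S : Set X, (a, S) ∈ 𝒮 ∧ Metric.diam S < ε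

/-- The (finite or countably infinite) sequence of tagged sets `T` indexed by `I ⊆ ℕ`
is `μ`-exhausting of `Ω` within the collection `𝒮`: its members belong to `𝒮`,
are pairwise disjoint, and cover all but a `μ`-null subset of `Ω`. -/
def IsExhausting {X : Type*} [MeasurableSpace X] (μ : Measure X) (Ω : Set X)
    (𝒮 : Set (X × Set X)) (I : Set ℕ) (T : ℕ → X × Set X) : Prop :=
  (∀ i ∈ I, T i ∈ 𝒮) ∧
  (∀ i ∈ I, ∀ j ∈ I, i ≠ j → Disjoint (T i).2 (T j).2) ∧
  μ (Ω \ ⋃ i ∈ I, (T i).2) = 0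

/-- `𝒮` is a `μ`-a.e. `λ`-Morse cover of `Ω`: it is a fine measurable λ-Morse cover and,
for every nonempty open `U ⊆ Ω` and every gauge `δ : U → (0,1]`, there is a sequence of
`δ`-fine sets from `𝒮`, each contained in `U`, that is `μ`-exhausting of `U`. -/
def IsAEMorseCover {X : Type*} [NormedAddCommGroup X] [NormedSpace ℝ X] [MeasurableSpace X]
    (μ : Measure X) (lam : ℝ) (Ω : Set X) (𝒮 : Set (X × Set X)) : Prop :=
  IsFineMorseCover lam Ω 𝒮 ∧
  ∀ U : Set X, IsOpen U → U.Nonempty → U ⊆ Ω →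
    ∀ δ : X → ℝ, (∀ x ∈ U, δ x ∈ Set.Ioc (0:ℝ) 1) →
      ∃ I T, IsExhausting μ U 𝒮 I T ∧
        ∀ i ∈ I, (T i).2 ⊆ U ∧ (T i).2 ⊆ Metric.closedBall (T i).1 (δ (T i).1)

/-- `f` is `μ`-measurable: there is a sequence of simple functions converging to `f`
`μ`-almost everywhere. -/
def MuMeasurable {X Y : Type*} [MeasurableSpace X] [NormedAddCommGroup Y]
    (μ : Measure X) (f : X → Y) : Prop :=
  ∃ F : ℕ → MeasureTheory.SimpleFunc X Y,
    ∀ᵐ x ∂μ, Filter.Tendsto (fun n => F n x) Filter.atTop (nhds (f x))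

/-- `a` is a point of approximate continuity of `f` (relative to the tagged collection
`𝒮`): for all `ε, η > 0` there is `R > 0` such that every `S ∈ 𝒮` with tag `a` contained
in `B(a,R)` satisfies `μ {x ∈ S | ‖f a - f x‖ > η} ≤ ε · μ S`. -/
def IsApproxContPt {X Y : Type*} [NormedAddCommGroup X] [MeasurableSpace X]
    [NormedAddCommGroup Y] (μ : Measure X) (𝒮 : Set (X × Set X)) (f : X → Y) (a : X) : Prop :=
  ∀ ε > (0:ℝ), ∀ η > (0:ℝ), ∃ R > (0:ℝ), ∀ S : Set X, (a, S) ∈ 𝒮 →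
    S ⊆ Metric.closedBall a R →
    μ {x ∈ S | η < ‖f a - f x‖} ≤ ENNReal.ofReal ε * μ S

/-- `a` is a Lebesgue point of `g` with respect to the value `c` (relative to the tagged
collection `𝒮`): for every `ε > 0` there is `R > 0` such that every `S ∈ 𝒮` with tag `a`
contained in `B(a,R)` satisfies `∫_S ‖g x - c‖ dμ ≤ ε · μ S`. -/
def IsLebesguePt {X Y : Type*} [NormedAddCommGroup X] [MeasurableSpace X]
    [NormedAddCommGroup Y] (μ : Measure X) (𝒮 : Set (X × Set X)) (g : X → Y) (a : X)
    (c : Y) : Prop :=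
  ∀ ε > (0:ℝ), ∃ R > (0:ℝ), ∀ S : Set X, (a, S) ∈ 𝒮 → S ⊆ Metric.closedBall a R →
    ∫⁻ x in S, ‖g x - c‖₊ ∂μ ≤ ENNReal.ofReal ε * μ S

open scoped ENNReal Topology

theorem exists_coloring_of_forall_card_le (rel : ℕ → ℕ → Prop) (n β : ℕ)
    (h : ∀ i < n, ∀ J : Finset ℕ, (∀ j ∈ J, j < i ∧ rel j i) → J.card ≤ β) :
    ∃ col : ℕ → ℕ, (∀ i < n, col i ≤ β) ∧ ∀ j i, j < i → i < n → rel j i → col j ≠ col i := by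
  classical
  induction n with
  | zero => exact ⟨0, by simp, by simp⟩
  | succ n ih =>
    obtain ⟨col, hcol_le, hcol_ne⟩ := ih fun i hi => h i (by omega)
    set J := (Finset.range n).filter (rel · n)
    have hJ : (J.image col).card < (Finset.range (β + 1)).card := by
      rw [Finset.card_range]
      exact Nat.lt_succ_of_le <| Finset.card_image_le.trans <| h n (by omega) J fun j hj => by
        simpa [J] using hj
    obtain ⟨k, hk, hkJ⟩ := Finset.exists_mem_notMem_of_card_lt_card hJ
    refine ⟨Function.update col n k, fun i hi => ?_, fun j i hji hi hrel => ?_⟩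
    · rcases Nat.lt_succ_iff_lt_or_eq.mp hi with hi | rfl
      · simpa [Function.update, hi.ne] using hcol_le i hi
      · simpa [Finset.mem_range, Nat.lt_succ_iff] using hk
    · rcases Nat.lt_succ_iff_lt_or_eq.mp hi with hi | rfl
      · simpa [Function.update, hi.ne, (hji.trans hi).ne] using hcol_ne j i hji hi hrel
      · simp only [Function.update_self, Function.update_of_ne hji.ne]
        exact fun hjk => hkJ <| Finset.mem_image.mpr ⟨j, by simp [J, hji, hrel], hjk⟩

theorem exists_pairwiseDisjoint_measure_biUnion_le {α : Type*} [MeasurableSpace α]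
    (μ : Measure α) (s : ℕ → Set α) (n β : ℕ)
    (h : ∀ i < n, ∀ J : Finset ℕ, (∀ j ∈ J, j < i ∧ (s j ∩ s i).Nonempty) → J.card ≤ β) :
    ∃ J ⊆ Finset.range n, (J : Set ℕ).PairwiseDisjoint s ∧
      μ (⋃ i ∈ Finset.range n, s i) ≤ (β + 1) * μ (⋃ j ∈ J, s j) := by
  classical
  obtain ⟨col, hcol_le, hcol_ne⟩ := exists_coloring_of_forall_card_le _ n β h
  set cls : ℕ → Finset ℕ := fun k => (Finset.range n).filter (col · = k)
  obtain ⟨k, -, hk⟩ := Finset.exists_max_image (Finset.range (β + 1))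
    (fun k => μ (⋃ j ∈ cls k, s j)) ⟨0, by simp⟩
  refine ⟨cls k, Finset.filter_subset _ _, fun i hi j hj hij => ?_, ?_⟩
  · simp only [cls, Finset.coe_filter, Finset.mem_range, Set.mem_ofPred_eq] at hi hj
    rw [Function.onFun, Set.disjoint_iff_inter_eq_empty, ← Set.not_nonempty_iff_eq_empty]
    intro hne
    rcases lt_or_gt_of_ne hij with hlt | hlt
    · exact hcol_ne i j hlt hj.1 hne (hi.2.trans hj.2.symm)
    · exact hcol_ne j i hlt hi.1 (Set.inter_comm _ _ ▸ hne) (hj.2.trans hi.2.symm)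
  calc μ (⋃ i ∈ Finset.range n, s i)
      ≤ μ (⋃ k' ∈ Finset.range (β + 1), ⋃ j ∈ cls k', s j) := by
        refine measure_mono fun x hx => ?_
        simp only [Set.mem_iUnion, Finset.mem_range, exists_prop] at hx ⊢
        obtain ⟨i, hi, hx⟩ := hx
        exact ⟨col i, Nat.lt_succ_of_le (hcol_le i hi), i, by simp [cls, hi], hx⟩
    _ ≤ ∑ k' ∈ Finset.range (β + 1), μ (⋃ j ∈ cls k', s j) := measure_biUnion_finset_le _ _
    _ ≤ ∑ _k' ∈ Finset.range (β + 1), μ (⋃ j ∈ cls k, s j) := Finset.sum_le_sum hk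
    _ = (β + 1) * μ (⋃ j ∈ cls k, s j) := by simp

theorem ENNReal.iInf_eq_zero_of_frequently_le_mul {f : ℕ → ℝ≥0∞} {θ : ℝ≥0∞}
    (hf : Antitone f) (h0 : f 0 ≠ ∞) (hθ : θ < 1) (h : ∀ N, ∃ n ≥ N, f (n + 1) ≤ θ * f n) :
    ⨅ n, f n = 0 := by
  have hpow : ∀ j, ∃ n, f n ≤ θ ^ j * f 0 := by
    intro j
    induction j with
    | zero => exact ⟨0, by simp⟩
    | succ j ih =>
      obtain ⟨n, hn⟩ := ih
      obtain ⟨m, hmn, hm⟩ := h n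
      refine ⟨m + 1, ?_⟩
      calc f (m + 1) ≤ θ * f m := hm
        _ ≤ θ * (θ ^ j * f 0) := mul_le_mul_right ((hf hmn).trans hn) θ
        _ = θ ^ (j + 1) * f 0 := by ring
  have hlim : Tendsto (fun j => θ ^ j * f 0) atTop (𝓝 0) := by
    simpa using ENNReal.Tendsto.mul_const (ENNReal.tendsto_pow_atTop_nhds_zero_of_lt_one hθ)
      (Or.inr h0)
  refine le_antisymm (ge_of_tendsto' hlim fun j => ?_) bot_le
  obtain ⟨n, hn⟩ := hpow j
  exact (iInf_le f n).trans hn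

theorem measure_diff_le_one_sub_inv_mul {α : Type*} [MeasurableSpace α] {μ : Measure α}
    {A B : Set α} {C : ℝ≥0∞} (hBA : B ⊆ A) (hB : NullMeasurableSet B μ) (hA : μ A ≠ ∞)
    (hAB : μ A ≤ C * μ B) : μ (A \ B) ≤ (1 - C⁻¹) * μ A := by
  have hle : C⁻¹ * μ A ≤ μ B := by
    rw [← ENNReal.div_eq_inv_mul]
    exact ENNReal.div_le_of_le_mul' hAB
  rw [measure_sdiff hBA hB (ne_top_of_le_ne_top hA (measure_mono hBA)),
    ENNReal.sub_mul fun _ _ => hA, one_mul]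
  exact tsub_le_tsub_left hle _

section Exhaustion

variable {ι X : Type*} [TopologicalSpace X] (s : ι → Set X) (G : Set X → Finset ι)
  (B : ℕ → Set X) (U : Set X)

/-- Round `n` works in the window `B n.unpair.1`, so every window is visited infinitely often. -/
def exhaustionRemainder : ℕ → Set X
  | 0 => U
  | n + 1 => exhaustionRemainder n \ ⋃ i ∈ G (exhaustionRemainder n ∩ B n.unpair.1), closure (s i)

def exhaustionSelection (n : ℕ) : Finset ι :=
  G (exhaustionRemainder s G B U n ∩ B n.unpair.1)

variable {s G B U}

theorem exhaustionRemainder_succ (n : ℕ) :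
    exhaustionRemainder s G B U (n + 1) =
      exhaustionRemainder s G B U n \ ⋃ i ∈ exhaustionSelection s G B U n, closure (s i) :=
  rfl

theorem isOpen_exhaustionRemainder (hU : IsOpen U) (n : ℕ) :
    IsOpen (exhaustionRemainder s G B U n) := by
  induction n with
  | zero => exact hU
  | succ n ih =>
    exact ih.sdiff <| (Finset.finite_toSet _).isClosed_biUnion fun _ _ => isClosed_closure

theorem antitone_exhaustionRemainder : Antitone (exhaustionRemainder s G B U) :=
  antitone_nat_of_succ_le fun _ => sdiff_subset

theorem exhaustionRemainder_subset (n : ℕ) : exhaustionRemainder s G B U n ⊆ U :=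
  antitone_exhaustionRemainder (Nat.zero_le n)

theorem subset_of_mem_exhaustionSelection (hGW : ∀ W, ∀ i ∈ G W, s i ⊆ W) {n : ℕ} {i : ι}
    (hi : i ∈ exhaustionSelection s G B U n) :
    s i ⊆ exhaustionRemainder s G B U n ∩ B n.unpair.1 :=
  hGW _ i hi

theorem pairwiseDisjoint_exhaustionSelection (hGW : ∀ W, ∀ i ∈ G W, s i ⊆ W)
    (hG : ∀ W, (G W : Set ι).PairwiseDisjoint s) :
    (⋃ n, (exhaustionSelection s G B U n : Set ι)).PairwiseDisjoint s := by
  have hlt : ∀ m n, m < n → ∀ i ∈ exhaustionSelection s G B U m,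
      ∀ j ∈ exhaustionSelection s G B U n, Disjoint (s i) (s j) := by
    intro m n hmn i hi j hj
    have hjR : s j ⊆ exhaustionRemainder s G B U (m + 1) :=
      (subset_of_mem_exhaustionSelection hGW hj).trans
        (inter_subset_left.trans (antitone_exhaustionRemainder hmn))
    rw [exhaustionRemainder_succ] at hjR
    exact Set.disjoint_left.mpr fun x hxi hxj =>
      (hjR hxj).2 (mem_biUnion hi (subset_closure hxi))
  simp only [Set.PairwiseDisjoint, Set.Pairwise, Set.mem_iUnion, Finset.mem_coe]
  rintro i ⟨m, hi⟩ j ⟨n, hj⟩ hij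
  rcases lt_trichotomy m n with hmn | rfl | hmn
  · exact hlt m n hmn i hi j hj
  · exact hG _ hi hj hij
  · exact (hlt n m hmn j hj i hi).symm

theorem measure_iInter_exhaustionRemainder_inter_eq_zero [MeasurableSpace X] {μ : Measure X}
    {C : ℝ≥0∞} (hC : C ≠ ∞) (hGW : ∀ W, ∀ i ∈ G W, s i ⊆ W)
    (hGmeas : ∀ W, ∀ i ∈ G W, MeasurableSet (s i))
    (hGμ : ∀ W, IsOpen W → W ⊆ U → μ W ≠ ∞ → μ W ≤ C * μ (⋃ i ∈ G W, s i))
    (hU : IsOpen U) (hB : ∀ M, IsOpen (B M)) (M : ℕ) (hBM : μ (B M) ≠ ∞) :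
    μ ((⋂ n, exhaustionRemainder s G B U n) ∩ B M) = 0 := by
  set f : ℕ → ℝ≥0∞ := fun n => μ (exhaustionRemainder s G B U n ∩ B M)
  have hdecay : ∀ n, n.unpair.1 = M → f (n + 1) ≤ (1 - C⁻¹) * f n := by
    intro n hn
    subst hn
    have hW : μ (exhaustionRemainder s G B U n ∩ B n.unpair.1) ≠ ∞ :=
      ne_top_of_le_ne_top hBM (measure_mono inter_subset_right)
    refine (measure_mono fun x hx => ?_).trans (measure_diff_le_one_sub_inv_mul
      (fun x hx => ?_) ((Finset.measurableSet_biUnion _ (hGmeas _)).nullMeasurableSet) hW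
      (hGμ _ ((isOpen_exhaustionRemainder hU n).inter (hB _))
        (inter_subset_left.trans (exhaustionRemainder_subset n)) hW))
    · rw [exhaustionRemainder_succ] at hx
      exact ⟨⟨hx.1.1, hx.2⟩, fun hxG => hx.1.2 (biUnion_mono subset_rfl
        (fun _ _ => subset_closure) hxG)⟩
    · obtain ⟨i, hi, hxi⟩ := mem_iUnion₂.mp hx
      exact subset_of_mem_exhaustionSelection hGW hi hxi
  have hinf : ⨅ n, f n = 0 := by
    refine ENNReal.iInf_eq_zero_of_frequently_le_mul
      (fun m n hmn => measure_mono (inter_subset_inter_left _ (antitone_exhaustionRemainder hmn)))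
      (ne_top_of_le_ne_top hBM (measure_mono inter_subset_right))
      (ENNReal.sub_lt_self ENNReal.one_ne_top one_ne_zero (ENNReal.inv_ne_zero.mpr hC))
      fun N => ⟨Nat.pair M N, Nat.right_le_pair M N, hdecay _ (by simp)⟩
  exact le_antisymm (hinf ▸ le_iInf fun n =>
    measure_mono (inter_subset_inter_left _ (iInter_subset _ n))) bot_le

theorem diff_iUnion_exhaustionSelection_subset (hB : ⋃ M, B M = univ) :
    U \ ⋃ n, ⋃ i ∈ exhaustionSelection s G B U n, s i ⊆
      (⋃ M, (⋂ n, exhaustionRemainder s G B U n) ∩ B M) ∪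
        ⋃ n, ⋃ i ∈ exhaustionSelection s G B U n, U ∩ (closure (s i) \ s i) := by
  rintro x ⟨hxU, hxs⟩
  by_cases hcl : ∃ n, ∃ i ∈ exhaustionSelection s G B U n, x ∈ closure (s i)
  · obtain ⟨n, i, hi, hxi⟩ := hcl
    exact Or.inr <| mem_iUnion.mpr ⟨n, mem_biUnion hi
      ⟨hxU, hxi, fun h => hxs (mem_iUnion.mpr ⟨n, mem_biUnion hi h⟩)⟩⟩
  · push Not at hcl
    obtain ⟨M, hM⟩ := mem_iUnion.mp (hB.symm ▸ mem_univ x : x ∈ ⋃ M, B M)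
    refine Or.inl <| mem_iUnion.mpr ⟨M, mem_iInter.mpr fun n => ?_, hM⟩
    induction n with
    | zero => exact hxU
    | succ n ih =>
      rw [exhaustionRemainder_succ]
      exact ⟨ih, fun h => by
        obtain ⟨i, hi, hxi⟩ := mem_iUnion₂.mp h
        exact hcl n i hi hxi⟩

end Exhaustion

theorem exists_countable_pairwiseDisjoint_measure_diff_eq_zero {ι X : Type*}
    [TopologicalSpace X] [SigmaCompactSpace X] [MeasurableSpace X] (μ : Measure X)
    [IsLocallyFiniteMeasure μ] {U : Set X} (hU : IsOpen U) (s : ι → Set X) (t : Set ι)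
    {C : ℝ≥0∞} (hC : C ≠ ∞) (hmeas : ∀ i ∈ t, MeasurableSet (s i))
    (hbd : ∀ i ∈ t, μ (U ∩ (closure (s i) \ s i)) = 0)
    (hsel : ∀ W, IsOpen W → W ⊆ U → μ W ≠ ∞ → ∃ G : Finset ι, ↑G ⊆ t ∧ (∀ i ∈ G, s i ⊆ W) ∧
      (G : Set ι).PairwiseDisjoint s ∧ μ W ≤ C * μ (⋃ i ∈ G, s i)) :
    ∃ u ⊆ t, u.Countable ∧ u.PairwiseDisjoint s ∧ (∀ i ∈ u, s i ⊆ U) ∧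
      μ (U \ ⋃ i ∈ u, s i) = 0 := by
  have hsel' : ∀ W, ∃ G : Finset ι, ↑G ⊆ t ∧ (∀ i ∈ G, s i ⊆ W) ∧
      (G : Set ι).PairwiseDisjoint s ∧
      (IsOpen W → W ⊆ U → μ W ≠ ∞ → μ W ≤ C * μ (⋃ i ∈ G, s i)) := by
    intro W
    by_cases hW : IsOpen W ∧ W ⊆ U ∧ μ W ≠ ∞
    · obtain ⟨G, hGt, hGW, hGdisj, hGμ⟩ := hsel W hW.1 hW.2.1 hW.2.2
      exact ⟨G, hGt, hGW, hGdisj, fun _ _ _ => hGμ⟩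
    · exact ⟨∅, by simp, by simp, by simp, fun h₁ h₂ h₃ => (hW ⟨h₁, h₂, h₃⟩).elim⟩
  choose G hGt hGW hGdisj hGμ using hsel'
  set B := μ.finiteSpanningSetsInOpen
  set u := ⋃ n, (exhaustionSelection s G B.set U n : Set ι)
  have hut : u ⊆ t := iUnion_subset fun n => hGt _
  refine ⟨u, hut, countable_iUnion fun n => Finset.countable_toSet _,
    pairwiseDisjoint_exhaustionSelection hGW hGdisj, fun i hi => ?_, ?_⟩
  · obtain ⟨n, hi⟩ := mem_iUnion.mp hi
    exact (subset_of_mem_exhaustionSelection hGW hi).trans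
      (inter_subset_left.trans (exhaustionRemainder_subset n))
  · have hu : ⋃ i ∈ u, s i = ⋃ n, ⋃ i ∈ exhaustionSelection s G B.set U n, s i := by
      simp only [u, biUnion_iUnion, Finset.mem_coe]
    rw [hu]
    refine measure_mono_null (diff_iUnion_exhaustionSelection_subset B.spanning)
      (measure_union_null (measure_iUnion_null fun M => ?_) (measure_iUnion_null fun n => ?_))
    · exact measure_iInter_exhaustionRemainder_inter_eq_zero hC hGW
        (fun W i hi => hmeas i (hGt W hi)) hGμ hU B.set_mem M (B.finite M).ne
    · exact measure_biUnion_null_iff (Finset.countable_toSet _) |>.mpr fun i hi =>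
        hbd i (hGt _ hi)

theorem exists_isExhausting_of_countable {X : Type*} [Nonempty X] [MeasurableSpace X]
    {μ : Measure X} {U : Set X} {𝒮 u : Set (X × Set X)} (hu𝒮 : u ⊆ 𝒮) (hu : u.Countable)
    (hdisj : u.PairwiseDisjoint Prod.snd) (hnull : μ (U \ ⋃ p ∈ u, p.2) = 0) :
    ∃ I T, IsExhausting μ U 𝒮 I T ∧ ∀ i ∈ I, T i ∈ u := by
  have : Countable u := hu
  obtain ⟨e, he⟩ := exists_injective_nat u
  set T : ℕ → X × Set X := Function.extend e Subtype.val fun _ => Classical.arbitrary _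
  have hT : ∀ p : u, T (e p) = p := he.extend_apply _ _
  have hI : ∀ i ∈ range e, T i ∈ u := by
    rintro _ ⟨p, rfl⟩
    exact hT p ▸ p.2
  refine ⟨range e, T, ⟨fun i hi => hu𝒮 (hI i hi), ?_, measure_mono_null ?_ hnull⟩, hI⟩
  · rintro _ ⟨p, rfl⟩ _ ⟨q, rfl⟩ hpq
    rw [hT, hT]
    exact hdisj p.2 q.2 fun h => hpq (congrArg e (Subtype.ext h))
  · refine sdiff_subset_sdiff_right (iUnion₂_subset fun p hp => ?_)
    have := subset_biUnion_of_mem (u := fun i => (T i).2) (mem_range_self (f := e) ⟨p, hp⟩)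
    rwa [hT] at this

theorem IsCompact.exists_dist_lt_of_forall_mem {X : Type*} [PseudoMetricSpace X] {K : Set X}
    (hK : IsCompact K) {c : ℕ → X} (hc : ∀ n, c n ∈ K) {ε : ℝ} (hε : 0 < ε) :
    ∃ p q, p < q ∧ dist (c p) (c q) < ε := by
  obtain ⟨x, -, φ, hφ, hlim⟩ := hK.tendsto_subseq hc
  obtain ⟨N, hN⟩ := Metric.cauchySeq_iff.mp hlim.cauchySeq ε hε
  exact ⟨φ N, φ (N + 1), hφ N.lt_succ_self, hN N le_rfl (N + 1) N.le_succ⟩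

theorem exists_forall_le_two_mul {X : Type*} {A : Set X} {f : X → ℝ} (hA : A.Nonempty)
    (hpos : ∀ x ∈ A, 0 < f x) (hbdd : BddAbove (f '' A)) : ∃ a ∈ A, ∀ x ∈ A, f x ≤ 2 * f a := by
  obtain ⟨x₀, hx₀⟩ := hA
  have hsup : 0 < sSup (f '' A) := (hpos x₀ hx₀).trans_le (le_csSup hbdd (mem_image_of_mem f hx₀))
  obtain ⟨_, ⟨a, ha, rfl⟩, hlt⟩ := exists_lt_of_lt_csSup ⟨_, mem_image_of_mem f hx₀⟩
    (half_lt_self hsup)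
  exact ⟨a, ha, fun x hx => by linarith [le_csSup hbdd (mem_image_of_mem f hx)]⟩

section Greedy

variable {X : Type*} (K : Set X) (S : X → Set X) (pick : Set X → X)

def greedyRemainder : ℕ → Set X
  | 0 => K
  | n + 1 => greedyRemainder n \ S (pick (greedyRemainder n))

def greedyPoint (n : ℕ) : X := pick (greedyRemainder K S pick n)

variable {K S pick}

theorem greedyRemainder_succ (n : ℕ) :
    greedyRemainder K S pick (n + 1) = greedyRemainder K S pick n \ S (greedyPoint K S pick n) :=
  rfl

theorem antitone_greedyRemainder : Antitone (greedyRemainder K S pick) :=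
  antitone_nat_of_succ_le fun _ => sdiff_subset

theorem greedyRemainder_subset (n : ℕ) : greedyRemainder K S pick n ⊆ K :=
  antitone_greedyRemainder (Nat.zero_le n)

theorem diff_greedyRemainder_subset (n : ℕ) :
    K \ greedyRemainder K S pick n ⊆ ⋃ i ∈ Finset.range n, S (greedyPoint K S pick i) := by
  induction n with
  | zero => simp [greedyRemainder]
  | succ n ih =>
    rintro x ⟨hxK, hx⟩
    simp only [greedyRemainder_succ, Set.mem_sdiff, not_and, not_not] at hx
    rw [Finset.range_add_one, Finset.set_biUnion_insert]
    by_cases hxn : x ∈ greedyRemainder K S pick n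
    · exact Or.inl (hx hxn)
    · exact Or.inr (ih ⟨hxK, hxn⟩)

variable {r : X → ℝ}

theorem greedyPoint_notMem_and_le_of_lt
    (hpick : ∀ n, (greedyRemainder K S pick n).Nonempty →
      greedyPoint K S pick n ∈ greedyRemainder K S pick n ∧
        ∀ x ∈ greedyRemainder K S pick n, r x ≤ 2 * r (greedyPoint K S pick n))
    {i j : ℕ} (hij : i < j) (hj : (greedyRemainder K S pick j).Nonempty) :
    greedyPoint K S pick j ∉ S (greedyPoint K S pick i) ∧
      r (greedyPoint K S pick j) ≤ 2 * r (greedyPoint K S pick i) := by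
  have hj' : greedyPoint K S pick j ∈ greedyRemainder K S pick (i + 1) :=
    antitone_greedyRemainder hij (hpick j hj).1
  exact ⟨hj'.2, (hpick i ⟨_, hj'.1⟩).2 _ hj'.1⟩

/-- A point never covered would force infinitely many `r x / 2`-separated greedy points in `K`. -/
theorem iInter_greedyRemainder_eq_empty [PseudoMetricSpace X] (hK : IsCompact K)
    (hr : ∀ a ∈ K, 0 < r a) (hS : ∀ a ∈ K, closedBall a (r a) ⊆ S a)
    (hpick : ∀ n, (greedyRemainder K S pick n).Nonempty →
      greedyPoint K S pick n ∈ greedyRemainder K S pick n ∧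
        ∀ x ∈ greedyRemainder K S pick n, r x ≤ 2 * r (greedyPoint K S pick n))
    (hne : ∀ n, (greedyRemainder K S pick n).Nonempty) : ⋂ n, greedyRemainder K S pick n = ∅ := by
  refine eq_empty_of_forall_notMem fun x hx => ?_
  have hxA := mem_iInter.mp hx
  have hK' : ∀ n, greedyPoint K S pick n ∈ K := fun n =>
    greedyRemainder_subset n (hpick n (hne n)).1
  obtain ⟨p, q, hpq, hdist⟩ := hK.exists_dist_lt_of_forall_mem hK'
    (half_pos (hr x (greedyRemainder_subset 0 (hxA 0))))
  have h₁ : r (greedyPoint K S pick p) < dist (greedyPoint K S pick q) (greedyPoint K S pick p) :=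
    lt_of_not_ge fun h => (greedyPoint_notMem_and_le_of_lt hpick hpq (hne q)).1
      (hS _ (hK' p) (mem_closedBall.mpr h))
  have h₂ := (hpick p (hne p)).2 x (hxA p)
  rw [dist_comm] at hdist
  linarith

end Greedy

theorem exists_measure_le_two_mul_measure_diff {X : Type*} [MeasurableSpace X] {μ : Measure X}
    {K : Set X} (hμK : μ K ≠ ∞) {A : ℕ → Set X} (hA : Antitone A)
    (hA' : (∀ n, (A n).Nonempty) → ⋂ n, A n = ∅) : ∃ n, μ K ≤ 2 * μ (K \ A n) := by
  by_cases hne : ∀ n, (A n).Nonempty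
  · rcases eq_or_ne (μ K) 0 with h0 | h0
    · exact ⟨0, by simp [h0]⟩
    have hlim : Tendsto (fun n => μ (K \ A n)) atTop (𝓝 (μ K)) := by
      have := tendsto_measure_iUnion_atTop (μ := μ)
        (fun m n hmn => sdiff_subset_sdiff_right (hA hmn) : Monotone fun n => K \ A n)
      rwa [← sdiff_iInter, hA' hne, sdiff_empty] at this
    obtain ⟨n, hn⟩ := (hlim.eventually (lt_mem_nhds (ENNReal.half_lt_self h0 hμK))).exists
    refine ⟨n, ?_⟩
    rw [mul_comm, ← ENNReal.div_le_iff two_ne_zero ENNReal.ofNat_ne_top]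
    exact hn.le
  · push Not at hne
    obtain ⟨n, hn⟩ := hne
    exact ⟨n, by simpa [hn] using le_mul_of_one_le_left zero_le one_le_two⟩

theorem exists_greedy_seq {X : Type*} [PseudoMetricSpace X] [Nonempty X] [MeasurableSpace X]
    (μ : Measure X) {K : Set X} (hK : IsCompact K) (hμK : μ K ≠ ∞) (S : X → Set X) (r : X → ℝ)
    (hr : ∀ a ∈ K, 0 < r a) (hr_bdd : BddAbove (r '' K))
    (hS : ∀ a ∈ K, closedBall a (r a) ⊆ S a) :
    ∃ (c : ℕ → X) (n : ℕ), (∀ i < n, c i ∈ K) ∧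
      (∀ i j, i < j → j < n → c j ∉ S (c i) ∧ r (c j) ≤ 2 * r (c i)) ∧
      μ K ≤ 2 * μ (⋃ i ∈ Finset.range n, S (c i)) := by
  have hpick : ∀ A : Set X, ∃ a, A ⊆ K → A.Nonempty → a ∈ A ∧ ∀ x ∈ A, r x ≤ 2 * r a := by
    intro A
    by_cases hA : A ⊆ K ∧ A.Nonempty
    · obtain ⟨a, ha, hmax⟩ := exists_forall_le_two_mul hA.2 (fun x hx => hr x (hA.1 hx))
        (hr_bdd.mono (image_mono hA.1))
      exact ⟨a, fun _ _ => ⟨ha, hmax⟩⟩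
    · exact ⟨Classical.arbitrary X, fun h₁ h₂ => (hA ⟨h₁, h₂⟩).elim⟩
  choose pick hpick using hpick
  have hpick' := fun n => hpick (greedyRemainder K S pick n) (greedyRemainder_subset n)
  have hex := exists_measure_le_two_mul_measure_diff hμK antitone_greedyRemainder
    (iInter_greedyRemainder_eq_empty hK hr hS hpick')
  have hne : ∀ i < Nat.find hex, (greedyRemainder K S pick i).Nonempty := fun i hi =>
    nonempty_iff_ne_empty.mpr fun h => Nat.find_min hex hi <| by
      simpa [h] using le_mul_of_one_le_left zero_le one_le_two
  refine ⟨greedyPoint K S pick, Nat.find hex,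
    fun i hi => greedyRemainder_subset i (hpick' i (hne i hi)).1,
    fun i j hij hj => greedyPoint_notMem_and_le_of_lt hpick' hij (hne j hj),
    (Nat.find_spec hex).trans (mul_le_mul_right (measure_mono (diff_greedyRemainder_subset _)) 2)⟩

section MorseSets

variable {X : Type*} [NormedAddCommGroup X] [NormedSpace ℝ X]

structure IsMorseSetOfRadius (lam : ℝ) (a : X) (r : ℝ) (S : Set X) : Prop where
  pos : 0 < r
  closedBall_subset : closedBall a r ⊆ S
  subset_closedBall : S ⊆ closedBall a (lam * r)
  segment_subset : ∀ y ∈ closedBall a r, ∀ x ∈ S, segment ℝ y x ⊆ S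

theorem isMorseSet_iff {lam : ℝ} {a : X} {S : Set X} :
    IsMorseSet lam a S ↔ ∃ r, IsMorseSetOfRadius lam a r S :=
  ⟨fun ⟨r, hr, h₁, h₂, h₃⟩ => ⟨r, hr, h₁, h₂, h₃⟩, fun ⟨r, hr, h₁, h₂, h₃⟩ => ⟨r, hr, h₁, h₂, h₃⟩⟩

namespace IsMorseSetOfRadius

variable {lam r : ℝ} {a x : X} {S : Set X}

theorem tag_mem (h : IsMorseSetOfRadius lam a r S) : a ∈ S :=
  h.closedBall_subset (mem_closedBall_self h.pos.le)

theorem dist_le_of_mem (h : IsMorseSetOfRadius lam a r S) (hx : x ∈ S) : dist x a ≤ lam * r :=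
  h.subset_closedBall hx

theorem lt_dist_of_notMem (h : IsMorseSetOfRadius lam a r S) (hx : x ∉ S) : r < dist x a :=
  lt_of_not_ge fun hle => hx (h.closedBall_subset hle)

theorem isBounded (h : IsMorseSetOfRadius lam a r S) : Bornology.IsBounded S :=
  isBounded_closedBall.subset h.subset_closedBall

/-- Starlikeness puts in `S` the cone with apex `x` over `closedBall a r`; its slice at height `t`
contains this ball, centred on the segment from `b` to `a`. -/
theorem closedBall_subset_of_mem (h : IsMorseSetOfRadius lam a r S) (hx : x ∈ S) {t : ℝ}
    (ht₀ : 0 < t) (ht₁ : t ≤ 1) (b : X) :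
    closedBall (b + t • (a - b)) (t * r - dist x b) ⊆ S := by
  intro z hz
  set u := x + t⁻¹ • (z - x)
  have hu : u - a = t⁻¹ • ((1 - t) • (b - x) + (z - (b + t • (a - b)))) := by
    simp only [u]
    match_scalars <;> field_simp <;> ring
  have hua : u ∈ closedBall a r := by
    rw [mem_closedBall, dist_eq_norm, hu, norm_smul, Real.norm_eq_abs, abs_inv,
      abs_of_pos ht₀, inv_mul_le_iff₀ ht₀]
    calc ‖(1 - t) • (b - x) + (z - (b + t • (a - b)))‖
        ≤ (1 - t) * dist x b + dist z (b + t • (a - b)) := by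
          refine (norm_add_le _ _).trans ?_
          rw [norm_smul, Real.norm_of_nonneg (by linarith), ← dist_eq_norm, ← dist_eq_norm,
            dist_comm b]
      _ ≤ t * r := by nlinarith [mem_closedBall.mp hz, dist_nonneg (x := x) (y := b)]
  have hz : z = t • u + (1 - t) • x := by
    simp only [u]
    match_scalars <;> field_simp; ring
  exact hz ▸ h.segment_subset u hua x hx ⟨t, 1 - t, ht₀.le, by linarith, by ring, rfl⟩

end IsMorseSetOfRadius

theorem IsMorseSet.exists_isMorseSetOfRadius_lt {lam ε : ℝ} {a : X} {S : Set X}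
    (h : IsMorseSet lam a S) (hε : diam S < ε) : ∃ r < ε, IsMorseSetOfRadius lam a r S := by
  obtain ⟨r, hr⟩ := isMorseSet_iff.mp h
  rcases subsingleton_or_nontrivial X with hX | hX
  · have hε₀ : 0 < ε := diam_nonneg.trans_lt hε
    have hlam : 0 ≤ lam := nonneg_of_mul_nonneg_left
      (dist_self a ▸ hr.dist_le_of_mem hr.tag_mem) hr.pos
    have hS : ∀ y : X, y ∈ S := fun y => Subsingleton.elim a y ▸ hr.tag_mem
    refine ⟨ε / 2, half_lt_self hε₀, half_pos hε₀, fun y _ => hS y, fun y _ => ?_,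
      fun _ _ _ _ z _ => hS z⟩
    rw [mem_closedBall, Subsingleton.elim y a, dist_self]
    positivity
  · obtain ⟨v, hv⟩ := exists_norm_eq X hr.pos.le
    have hav : a + v ∈ S := hr.closedBall_subset (by simp [hv])
    refine ⟨r, ?_, hr⟩
    calc r = dist (a + v) a := by simp [hv]
      _ ≤ diam S := dist_le_diam_of_mem hr.isBounded hav hr.tag_mem
      _ < ε := hε

theorem IsFineMorseCover.exists_fine [MeasurableSpace X] {lam δ : ℝ} {Ω V : Set X}
    {𝒮 : Set (X × Set X)} (h𝒮 : IsFineMorseCover lam Ω 𝒮) (hV : IsOpen V) (hVΩ : V ⊆ Ω)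
    {a : X} (ha : a ∈ V) (hδ : 0 < δ) :
    ∃ S r, (a, S) ∈ 𝒮 ∧ IsMorseSetOfRadius lam a r S ∧ r < δ ∧ S ⊆ V ∧ S ⊆ closedBall a δ := by
  obtain ⟨ε, hε, hball⟩ := Metric.isOpen_iff.mp hV a ha
  obtain ⟨S, hS𝒮, hSdiam⟩ := h𝒮.2 a (hVΩ ha) (min δ (ε / 2)) (lt_min hδ (half_pos hε))
  obtain ⟨r, hrε, hr⟩ := ((h𝒮.1 _ hS𝒮).1).exists_isMorseSetOfRadius_lt hSdiam
  have hS : S ⊆ closedBall a (min δ (ε / 2)) := fun x hx =>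
    (dist_le_diam_of_mem hr.isBounded hx hr.tag_mem).trans hSdiam.le
  refine ⟨S, r, hS𝒮, hr, hrε.trans_le (min_le_left _ _), fun x hx => hball ?_,
    hS.trans (closedBall_subset_closedBall (min_le_left _ _))⟩
  exact mem_ball.mpr ((mem_closedBall.mp (hS hx)).trans_lt
    ((min_le_right _ _).trans_lt (half_lt_self hε)))

end MorseSets

section Packing

variable {X : Type*} [NormedAddCommGroup X] [NormedSpace ℝ X] [ProperSpace X]

theorem exists_card_le_of_forall_lt_dist (R : ℝ) :
    ∃ N : ℕ, ∀ (s : Finset X) (z : X) (c : ℝ), 0 < c → (∀ x ∈ s, dist x z ≤ R * c) →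
      (∀ x ∈ s, ∀ y ∈ s, x ≠ y → c < dist x y) → s.card ≤ N := by
  obtain ⟨t, -, ht, hcover⟩ :=
    finite_cover_balls_of_compact (isCompact_closedBall (0 : X) R) one_half_pos
  refine ⟨ht.toFinset.card, fun s z c hc hs hsep => ?_⟩
  have hscale : ∀ x y : X, dist (c⁻¹ • (x - z)) (c⁻¹ • (y - z)) = c⁻¹ * dist x y := by
    intro x y
    rw [dist_smul₀, Real.norm_of_nonneg (inv_nonneg.mpr hc.le), dist_sub_right]
  have hpick : ∀ x ∈ s, ∃ y ∈ ht.toFinset, dist (c⁻¹ • (x - z)) y < 1 / 2 := by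
    intro x hx
    have hmem : c⁻¹ • (x - z) ∈ closedBall (0 : X) R := by
      rw [mem_closedBall, ← smul_zero c⁻¹, ← sub_self z, hscale, inv_mul_le_iff₀ hc, mul_comm]
      exact hs x hx
    simpa using hcover hmem
  choose! f hft hf using hpick
  refine Finset.card_le_card_of_injOn f hft fun x hx y hy hxy => by_contra fun hne => ?_
  have hlt : c⁻¹ * dist x y < 1 := by
    rw [← hscale]
    calc dist (c⁻¹ • (x - z)) (c⁻¹ • (y - z))
        ≤ dist (c⁻¹ • (x - z)) (f x) + dist (c⁻¹ • (y - z)) (f y) := by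
          rw [hxy]; exact dist_triangle_right _ _ _
      _ < 1 / 2 + 1 / 2 := add_lt_add (hf x hx) (hf y hy)
      _ = 1 := by norm_num
  rw [inv_mul_lt_iff₀ hc, mul_one] at hlt
  exact (hsep x hx y hy hne).not_gt hlt

end Packing

section Predecessors

variable {X : Type*} [NormedAddCommGroup X] [NormedSpace ℝ X]

/-- The Morse sets `S j`, `j ∈ J`, that precede, in a greedy selection, a set with tag `b` and
radius `ρ` which they all meet. -/
structure IsMorsePredecessors (lam : ℝ) (b : X) (ρ : ℝ) (J : Finset ℕ) (a : ℕ → X)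
    (r : ℕ → ℝ) (S : ℕ → Set X) : Prop where
  morse : ∀ j ∈ J, IsMorseSetOfRadius lam (a j) (r j) (S j)
  pos : 0 < ρ
  le_two_mul : ∀ j ∈ J, ρ ≤ 2 * r j
  notMem : ∀ j ∈ J, b ∉ S j
  tag_notMem : ∀ j ∈ J, ∀ k ∈ J, j < k → a k ∉ S j
  radius_le : ∀ j ∈ J, ∀ k ∈ J, j < k → r k ≤ 2 * r j
  exists_dist_le : ∀ j ∈ J, ∃ x ∈ S j, dist x b ≤ lam * ρ

theorem isMorsePredecessors_of_greedy {lam : ℝ} {n i : ℕ} {a : ℕ → X} {r : ℕ → ℝ}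
    {S : ℕ → Set X} (hmorse : ∀ i < n, IsMorseSetOfRadius lam (a i) (r i) (S i))
    (hgreedy : ∀ i j, i < j → j < n → a j ∉ S i ∧ r j ≤ 2 * r i) (hi : i < n) {J : Finset ℕ}
    (hJ : ∀ j ∈ J, j < i ∧ (S j ∩ S i).Nonempty) :
    IsMorsePredecessors lam (a i) (r i) J a r S where
  morse j hj := hmorse j ((hJ j hj).1.trans hi)
  pos := (hmorse i hi).pos
  le_two_mul j hj := (hgreedy j i (hJ j hj).1 hi).2
  notMem j hj := (hgreedy j i (hJ j hj).1 hi).1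
  tag_notMem j _ k hk hjk := (hgreedy j k hjk ((hJ k hk).1.trans hi)).1
  radius_le j _ k hk hjk := (hgreedy j k hjk ((hJ k hk).1.trans hi)).2
  exists_dist_le j hj := by
    obtain ⟨x, hxj, hxi⟩ := (hJ j hj).2
    exact ⟨x, hxj, (hmorse i hi).dist_le_of_mem hxi⟩

namespace IsMorsePredecessors

variable {lam ρ : ℝ} {b : X} {J : Finset ℕ} {a : ℕ → X} {r : ℕ → ℝ} {S : ℕ → Set X}

theorem mono (h : IsMorsePredecessors lam b ρ J a r S) {J' : Finset ℕ} (hJ' : J' ⊆ J) :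
    IsMorsePredecessors lam b ρ J' a r S where
  morse j hj := h.morse j (hJ' hj)
  pos := h.pos
  le_two_mul j hj := h.le_two_mul j (hJ' hj)
  notMem j hj := h.notMem j (hJ' hj)
  tag_notMem j hj k hk := h.tag_notMem j (hJ' hj) k (hJ' hk)
  radius_le j hj k hk := h.radius_le j (hJ' hj) k (hJ' hk)
  exists_dist_le j hj := h.exists_dist_le j (hJ' hj)

theorem lt_dist (h : IsMorsePredecessors lam b ρ J a r S) {j : ℕ} (hj : j ∈ J) :
    r j < dist (a j) b :=
  dist_comm b (a j) ▸ (h.morse j hj).lt_dist_of_notMem (h.notMem j hj)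

theorem dist_le (h : IsMorsePredecessors lam b ρ J a r S) (hlam : 0 ≤ lam) {j : ℕ}
    (hj : j ∈ J) : dist (a j) b ≤ 3 * lam * r j := by
  obtain ⟨x, hx, hxb⟩ := h.exists_dist_le j hj
  have hxa := (h.morse j hj).dist_le_of_mem hx
  have := h.le_two_mul j hj
  calc dist (a j) b ≤ dist x (a j) + dist x b := dist_triangle_left _ _ _
    _ ≤ 3 * lam * r j := by nlinarith

theorem min_lt_dist (h : IsMorsePredecessors lam b ρ J a r S) {j k : ℕ} (hj : j ∈ J)
    (hk : k ∈ J) (hjk : j ≠ k) : min (r j) (r k) < dist (a j) (a k) := by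
  rcases hjk.lt_or_gt with hlt | hlt
  · exact (min_le_left _ _).trans_lt <|
      dist_comm (a k) (a j) ▸ (h.morse j hj).lt_dist_of_notMem (h.tag_notMem j hj k hk hlt)
  · exact (min_le_right _ _).trans_lt <|
      (h.morse k hk).lt_dist_of_notMem (h.tag_notMem k hk j hj hlt)

theorem card_le_of_packing (h : IsMorsePredecessors lam b ρ J a r S) {R c : ℝ} {N : ℕ}
    (hN : ∀ (s : Finset X) (z : X) (c : ℝ), 0 < c → (∀ x ∈ s, dist x z ≤ R * c) →
      (∀ x ∈ s, ∀ y ∈ s, x ≠ y → c < dist x y) → s.card ≤ N)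
    (hc : 0 < c) (hcr : ∀ j ∈ J, c ≤ r j) (hR : ∀ j ∈ J, dist (a j) b ≤ R * c) :
    J.card ≤ N := by
  classical
  have hsep : ∀ j ∈ J, ∀ k ∈ J, j ≠ k → c < dist (a j) (a k) := fun j hj k hk hjk =>
    (le_min (hcr j hj) (hcr k hk)).trans_lt (h.min_lt_dist hj hk hjk)
  have hinj : Set.InjOn a J := fun j hj k hk hjk => by_contra fun hne => by
    simpa [hjk] using hc.trans (hsep j hj k hk hne)
  rw [← Finset.card_image_of_injOn hinj]
  refine hN _ b c hc (by simpa using hR) ?_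
  simp only [Finset.mem_image]
  rintro _ ⟨j, hj, rfl⟩ _ ⟨k, hk, rfl⟩ hne
  exact hsep j hj k hk fun hjk => hne (hjk ▸ rfl)

theorem exists_card_le_of_dist_le [ProperSpace X] :
    ∃ N : ℕ, ∀ {b ρ J a r} {S : ℕ → Set X}, IsMorsePredecessors lam b ρ J a r S →
      (∀ j ∈ J, dist (a j) b ≤ 12 * lam ^ 2 * ρ) → J.card ≤ N := by
  obtain ⟨N, hN⟩ := exists_card_le_of_forall_lt_dist (X := X) (24 * lam ^ 2)
  refine ⟨N, fun h hJ => h.card_le_of_packing hN (half_pos h.pos)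
    (fun j hj => by linarith [h.le_two_mul j hj]) fun j hj => ?_⟩
  linarith [hJ j hj]

theorem exists_card_le_of_dist_lt_dist (hlam : 0 < lam) [ProperSpace X] :
    ∃ N : ℕ, ∀ {b ρ J a r} {S : ℕ → Set X}, IsMorsePredecessors lam b ρ J a r S →
      (∀ j ∈ J, ∀ k ∈ J, j < k → dist (a j) b < dist (a k) b) → J.card ≤ N := by
  obtain ⟨N, hN⟩ := exists_card_le_of_forall_lt_dist (X := X) (18 * lam ^ 2)
  refine ⟨N, fun {b ρ J a r S} h hJ => ?_⟩
  rcases J.eq_empty_or_nonempty with rfl | hne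
  · simp
  set j₀ := J.min' hne
  have hj₀ : j₀ ∈ J := J.min'_mem hne
  have hle : ∀ k ∈ J, r k ≤ 2 * r j₀ ∧ dist (a j₀) b ≤ dist (a k) b := by
    intro k hk
    rcases (J.min'_le k hk).lt_or_eq with hlt | heq
    · exact ⟨h.radius_le j₀ hj₀ k hk hlt, (hJ j₀ hj₀ k hk hlt).le⟩
    · rw [← heq]
      exact ⟨by linarith [(h.morse j₀ hj₀).pos], le_rfl⟩
  refine h.card_le_of_packing hN (c := r j₀ / (3 * lam))
    (div_pos (h.morse j₀ hj₀).pos (by positivity)) (fun k hk => ?_) fun k hk => ?_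
  · rw [div_le_iff₀ (by positivity)]
    linarith [h.lt_dist hj₀, (hle k hk).2, h.dist_le hlam.le hk]
  · have : 18 * lam ^ 2 * (r j₀ / (3 * lam)) = 6 * lam * r j₀ := by
      field_simp
      ring
    rw [this]
    nlinarith [h.dist_le hlam.le hk, (hle k hk).1]

noncomputable def direction (b : X) (a : ℕ → X) (j : ℕ) : X := (dist (a j) b)⁻¹ • (a j - b)

theorem norm_direction_le (b : X) (a : ℕ → X) (j : ℕ) : ‖direction b a j‖ ≤ 1 := by
  rw [direction, norm_smul, norm_inv, Real.norm_eq_abs, abs_dist, ← dist_eq_norm]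
  exact inv_mul_le_one

/-- Otherwise the cone of the earlier set over its ball would contain the later tag. -/
theorem dist_lt_dist_of_dist_direction_le (h : IsMorsePredecessors lam b ρ J a r S)
    (hlam : 0 < lam) {j k : ℕ} (hj : j ∈ J) (hk : k ∈ J) (hjk : j < k)
    (hfar : 12 * lam ^ 2 * ρ < dist (a k) b)
    (hdir : dist (direction b a j) (direction b a k) ≤ 1 / (4 * lam)) :
    dist (a j) b < dist (a k) b := by
  by_contra! hkj
  set Dj := dist (a j) b
  set Dk := dist (a k) b
  have hDk : 0 < Dk := lt_of_le_of_lt (by have := h.pos; positivity) hfar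
  have hDj : 0 < Dj := hDk.trans_le hkj
  obtain ⟨x, hx, hxb⟩ := h.exists_dist_le j hj
  refine h.tag_notMem j hj k hk hjk <| (h.morse j hj).closedBall_subset_of_mem hx
    (div_pos hDk hDj) ((div_le_one hDj).mpr hkj) b ?_
  have hak : a k - (b + (Dk / Dj) • (a j - b)) = Dk • (direction b a k - direction b a j) := by
    simp only [direction, smul_sub, smul_smul, Dk, Dj, mul_inv_cancel₀ hDk.ne', one_smul,
      div_eq_mul_inv]
    abel
  have hcone : Dk / (3 * lam) ≤ Dk / Dj * r j := by
    rw [div_mul_eq_mul_div, div_le_div_iff₀ (by positivity) hDj]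
    nlinarith [h.dist_le hlam.le hj]
  have hxb' : dist x b ≤ Dk / (12 * lam) := by
    rw [le_div_iff₀ (by positivity)]
    nlinarith
  rw [mem_closedBall, dist_eq_norm, hak, norm_smul, Real.norm_of_nonneg hDk.le, ← dist_eq_norm,
    dist_comm]
  calc Dk * dist (direction b a j) (direction b a k) ≤ Dk * (1 / (4 * lam)) := by gcongr
    _ = Dk / (3 * lam) - Dk / (12 * lam) := by field_simp; ring
    _ ≤ Dk / Dj * r j - dist x b := by linarith

theorem exists_card_le_of_lt_dist (hlam : 0 < lam) [ProperSpace X] :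
    ∃ N : ℕ, ∀ {b ρ J a r} {S : ℕ → Set X}, IsMorsePredecessors lam b ρ J a r S →
      (∀ j ∈ J, 12 * lam ^ 2 * ρ < dist (a j) b) → J.card ≤ N := by
  classical
  obtain ⟨N, hN⟩ := exists_card_le_of_dist_lt_dist (X := X) hlam
  obtain ⟨t, -, ht, hcover⟩ := finite_cover_balls_of_compact (isCompact_closedBall (0 : X) 1)
    (show 0 < 1 / (8 * lam) by positivity)
  refine ⟨N * ht.toFinset.card, fun {b ρ J a r S} h hJ => ?_⟩
  have hpick : ∀ j, ∃ y ∈ ht.toFinset, direction b a j ∈ ball y (1 / (8 * lam)) := fun j => by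
    simpa using hcover (mem_closedBall_zero_iff.mpr (norm_direction_le b a j))
  choose f hft hf using hpick
  refine (J.card_le_mul_card_image N fun y _ => hN (h.mono (Finset.filter_subset _ _)) ?_).trans
    (Nat.mul_le_mul_left N (Finset.card_le_card (Finset.image_subset_iff.mpr fun j _ => hft j)))
  simp only [Finset.mem_filter]
  rintro j ⟨hj, rfl⟩ k ⟨hk, hfk⟩ hjk
  refine h.dist_lt_dist_of_dist_direction_le hlam hj hk hjk (hJ k hk) ?_
  have := add_lt_add (mem_ball.mp (hf j)) (mem_ball'.mp (hfk ▸ hf k))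
  linarith [dist_triangle (direction b a j) (f j) (direction b a k), show
    1 / (8 * lam) + 1 / (8 * lam) = 1 / (4 * lam) by field_simp; ring]

theorem exists_card_le (hlam : 0 < lam) [ProperSpace X] :
    ∃ N : ℕ, ∀ {b ρ J a r} {S : ℕ → Set X}, IsMorsePredecessors lam b ρ J a r S → J.card ≤ N := by
  classical
  obtain ⟨N₁, hN₁⟩ := exists_card_le_of_dist_le (X := X) (lam := lam)
  obtain ⟨N₂, hN₂⟩ := exists_card_le_of_lt_dist (X := X) hlam
  refine ⟨N₁ + N₂, fun {b ρ J a r S} h => ?_⟩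
  rw [← Finset.card_filter_add_card_filter_not fun j => dist (a j) b ≤ 12 * lam ^ 2 * ρ]
  exact add_le_add (hN₁ (h.mono (Finset.filter_subset _ _)) fun j hj => (Finset.mem_filter.mp hj).2)
    (hN₂ (h.mono (Finset.filter_subset _ _)) fun j hj => lt_of_not_ge (Finset.mem_filter.mp hj).2)

end IsMorsePredecessors

end Predecessors

theorem IsFineMorseCover.exists_finset_pairwiseDisjoint_measure_le {X : Type*}
    [NormedAddCommGroup X] [NormedSpace ℝ X] [FiniteDimensional ℝ X] [MeasurableSpace X]
    (μ : Measure X) [μ.Regular] {lam : ℝ} (hlam : 0 < lam) {Ω U : Set X}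
    {𝒮 : Set (X × Set X)} (h𝒮 : IsFineMorseCover lam Ω 𝒮) (hUΩ : U ⊆ Ω) {δ : X → ℝ}
    (hδ : ∀ x ∈ U, δ x ∈ Ioc (0 : ℝ) 1) :
    ∃ C : ℕ, ∀ V, IsOpen V → V ⊆ U → μ V ≠ ∞ → ∃ G : Finset (X × Set X),
      ↑G ⊆ {p | p ∈ 𝒮 ∧ p.2 ⊆ closedBall p.1 (δ p.1)} ∧ (∀ p ∈ G, p.2 ⊆ V) ∧
      (G : Set (X × Set X)).PairwiseDisjoint Prod.snd ∧ μ V ≤ C * μ (⋃ p ∈ G, p.2) := by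
  classical
  obtain ⟨β, hβ⟩ := IsMorsePredecessors.exists_card_le (X := X) hlam
  refine ⟨4 * (β + 1), fun V hV hVU hμV => ?_⟩
  rcases eq_or_ne (μ V) 0 with h0 | h0
  · exact ⟨∅, by simp, by simp, by simp, by simp [h0]⟩
  choose! S r hS𝒮 hSr hrδ hSV hSδ using fun a (ha : a ∈ V) =>
    h𝒮.exists_fine hV (hVU.trans hUΩ) ha (hδ a (hVU ha)).1
  obtain ⟨K, hKV, hK, hKμ⟩ := hV.exists_lt_isCompact (ENNReal.half_lt_self h0 hμV)
  obtain ⟨c, n, hcK, hgreedy, hcov⟩ := exists_greedy_seq μ hK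
    (ne_top_of_le_ne_top hμV (measure_mono hKV)) S r (fun a ha => (hSr a (hKV ha)).pos)
    ⟨1, by rintro _ ⟨a, ha, rfl⟩; exact (hrδ a (hKV ha)).le.trans (hδ a (hVU (hKV ha))).2⟩
    fun a ha => (hSr a (hKV ha)).closedBall_subset
  have hmorse : ∀ i < n, IsMorseSetOfRadius lam (c i) (r (c i)) (S (c i)) :=
    fun i hi => hSr _ (hKV (hcK i hi))
  obtain ⟨J, hJn, hJdisj, hJμ⟩ := exists_pairwiseDisjoint_measure_biUnion_le μ (S ∘ c) n β
    fun i hi J hJ => hβ (isMorsePredecessors_of_greedy hmorse hgreedy hi hJ)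
  have hcV : ∀ j ∈ J, c j ∈ V := fun j hj => hKV (hcK j (Finset.mem_range.mp (hJn hj)))
  refine ⟨J.image fun i => (c i, S (c i)), ?_, ?_, ?_, ?_⟩
  · simp only [Finset.coe_image, image_subset_iff]
    exact fun j hj => ⟨hS𝒮 _ (hcV j hj), hSδ _ (hcV j hj)⟩
  · simpa using fun j hj => hSV _ (hcV j hj)
  · simp only [Finset.coe_image]
    rintro _ ⟨i, hi, rfl⟩ _ ⟨j, hj, rfl⟩ hij
    exact hJdisj hi hj fun h => hij (h ▸ rfl)
  · rw [Finset.set_biUnion_finset_image]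
    calc μ V ≤ 2 * μ K := by
          rw [mul_comm, ← ENNReal.div_le_iff two_ne_zero ENNReal.ofNat_ne_top]
          exact hKμ.le
      _ ≤ 2 * (2 * ((β + 1) * μ (⋃ j ∈ J, S (c j)))) := by
          gcongr
          exact hcov.trans (by gcongr; exact hJμ)
      _ = ↑(4 * (β + 1)) * μ (⋃ j ∈ J, S (c j)) := by push_cast; ring

theorem isAEMorseCover_of_closed_or_null_boundary_general
    {X : Type*} [NormedAddCommGroup X] [NormedSpace ℝ X] [FiniteDimensional ℝ X]
    [MeasurableSpace X]
    (μ : Measure X) [μ.Regular]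
    (lam : ℝ) (hlam : 1 ≤ lam) (Ω : Set X)
    (𝒮 : Set (X × Set X)) (h𝒮 : IsFineMorseCover lam Ω 𝒮)
    (hcl : (∀ p ∈ 𝒮, IsClosed p.2) ∨ (∀ p ∈ 𝒮, μ (Ω ∩ (closure p.2 \ p.2)) = 0)) :
    IsAEMorseCover μ lam Ω 𝒮 := by
  refine ⟨h𝒮, fun U hU _ hUΩ δ hδ => ?_⟩
  have hbd : ∀ p ∈ 𝒮, μ (U ∩ (closure p.2 \ p.2)) = 0 := by
    intro p hp
    rcases hcl with hcl | hcl
    · simp [(hcl p hp).closure_eq]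
    · exact measure_mono_null (inter_subset_inter_left _ hUΩ) (hcl p hp)
  obtain ⟨C, hC⟩ := h𝒮.exists_finset_pairwiseDisjoint_measure_le μ (by linarith) hUΩ hδ
  obtain ⟨u, hut, hu, hdisj, huU, hnull⟩ := exists_countable_pairwiseDisjoint_measure_diff_eq_zero
    μ hU Prod.snd _ (ENNReal.natCast_ne_top C) (fun p hp => (h𝒮.1 p hp.1).2.1)
    (fun p hp => hbd p hp.1) hC
  obtain ⟨I, T, hT, hTu⟩ := exists_isExhausting_of_countable (fun p hp => (hut hp).1) hu hdisj hnull
  exact ⟨I, T, hT, fun i hi => ⟨huU _ (hTu i hi), (hut (hTu i hi)).2⟩⟩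

/-- A fine, measurable, `λ`-Morse cover `𝒮` of an open set `Ω` is a `μ`-a.e. `λ`-Morse
cover of `Ω` if it consists of closed sets, or if for each `S ∈ 𝒮` one has
`μ(Ω ∩ (cl S \ S)) = 0`. -/
theorem isAEMorseCover_of_closed_or_null_boundary
    {X : Type*} [NormedAddCommGroup X] [NormedSpace ℝ X] [FiniteDimensional ℝ X]
    [MeasurableSpace X] [OpensMeasurableSpace X]
    (μ : Measure X) [μ.Regular] [μ.IsComplete]
    (lam : ℝ) (hlam : 1 ≤ lam) (Ω : Set X) (hΩ : IsOpen Ω)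
    (𝒮 : Set (X × Set X)) (h𝒮 : IsFineMorseCover lam Ω 𝒮)
    (hcl : (∀ p ∈ 𝒮, IsClosed p.2) ∨ (∀ p ∈ 𝒮, μ (Ω ∩ (closure p.2 \ p.2)) = 0)) :
    IsAEMorseCover μ lam Ω 𝒮 :=
  isAEMorseCover_of_closed_or_null_boundary_general μ lam hlam Ω 𝒮 h𝒮 hcl
end

section
/- Let 𝒮 be a μ-a.e. λ-Morse cover of an open set Ω ⊆ X, Y a Banach space, and f : Ω → Y μ-measurable. Then μ-almost every point of Ω is a point of approximate continuity of f. -/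
open MeasureTheory Set Metric Filter

/-!
The heart of the matter is a density theorem: if `C` is measurable, almost every point of `C` is
a density point of `C` with respect to the Morse sets of `𝒮`. Its proof follows Besicovitch. Fix
a bounded set `E ⊆ C` of points at which arbitrarily small Morse sets have relative density of
`C` below `1 - ε`, and select such sets greedily, each time with an inner radius at least half of
the largest one still available. The selected sets cover `E`, and no point lies in more than
`N = N(λ, X)` of them: seen from a common point, later centres that come closer lie in
directions separated by a cone condition (starlikeness), and later centres that lie farther away
are separated at the scale of the last radius; an Erdős–Szekeres count combines the two packing
bounds. Hence `ε μ E ≤ N μ (U \ C)` for every open `U ⊇ E`, and approximating `C` near `E` from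
outside by open sets (outer regularity) gives `μ E = 0`. Approximate continuity follows by
applying the density theorem, up to a null set, to the countably many sets
`{x | ‖f x - v‖ < 1 / (n + 1)}` with `v` in a countable set dense in the essential range of `f`.
-/

open scoped ENNReal

section Packing

variable {X : Type*} [PseudoMetricSpace X]

def IsPackingBound (s : Set X) (c : ℝ) (N : ℕ) : Prop :=
  ∀ {ι : Type} (G : Finset ι) (p : ι → X), (∀ i ∈ G, p i ∈ s) →
    (G : Set ι).Pairwise (fun i j => c < dist (p i) (p j)) → G.card ≤ N

theorem TotallyBounded.exists_isPackingBound {s : Set X} (hs : TotallyBounded s) {c : ℝ}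
    (hc : 0 < c) : ∃ N, IsPackingBound s c N := by
  obtain ⟨t, ht, hst⟩ := Metric.totallyBounded_iff.mp hs (c / 2) (half_pos hc)
  refine ⟨ht.toFinset.card, fun G p hp hsep => ?_⟩
  rcases G.eq_empty_or_nonempty with rfl | ⟨i, -⟩
  · simp
  have : Nonempty X := ⟨p i⟩
  have hcenter : ∀ i ∈ G, ∃ z ∈ ht.toFinset, p i ∈ ball z (c / 2) := fun i hi => by
    simpa using hst (hp i hi)
  choose! z hzt hpz using hcenter
  refine Finset.card_le_card_of_injOn z hzt fun i hi j hj hij => ?_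
  by_contra hne
  have hi' := hpz i hi
  have hj' := hpz j hj
  rw [mem_ball, hij] at hi'
  rw [mem_ball'] at hj'
  linarith [hsep hi hj hne, dist_triangle (p i) (z j) (p j)]

theorem IsPackingBound.card_le {s : Set X} {c : ℝ} {N : ℕ} (h : IsPackingBound s c N)
    {ι : Type} [LinearOrder ι] {G : Finset ι} {p : ι → X}
    (hp : ∀ i ∈ G, p i ∈ s) (hsep : ∀ i ∈ G, ∀ j ∈ G, i < j → c < dist (p j) (p i)) :
    G.card ≤ N := by
  refine h G p hp fun i hi j hj hij => ?_
  rcases hij.lt_or_gt with hij | hij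
  · rw [dist_comm]; exact hsep i hi j hj hij
  · exact hsep j hj i hi hij

end Packing

theorem Finset.card_le_mul_of_chain_bounds {ι β : Type*} [LinearOrder ι] [LinearOrder β]
    (d : ι → β) (F : Finset ι) {p q : ℕ} (hp : ∀ G ⊆ F, AntitoneOn d G → G.card ≤ p)
    (hq : ∀ G ⊆ F, StrictMonoOn d G → G.card ≤ q) :
    F.card ≤ p * q := by
  let IsChainBelow (k : ι) (G : Finset ι) : Prop :=
    (∀ j ∈ G, j ≤ k ∧ d j ≤ d k) ∧ StrictMonoOn d G
  -- The level sets of `height` are antitone chains, and `height` takes at most `q` values.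
  let height (k : ι) : ℕ := (F.powerset.filter (IsChainBelow k)).sup Finset.card
  have height_le : ∀ k, height k ≤ q := fun k => Finset.sup_le fun G hG => by
    rw [Finset.mem_filter, Finset.mem_powerset] at hG
    exact hq G hG.1 hG.2.2
  have singleton_mem : ∀ k ∈ F, {k} ∈ F.powerset.filter (IsChainBelow k) := fun k hk =>
    Finset.mem_filter.2 ⟨by simpa using hk, by simp [IsChainBelow]⟩
  have one_le_height : ∀ k ∈ F, 1 ≤ height k := fun k hk =>
    Finset.le_sup (f := Finset.card) (singleton_mem k hk)
  have height_lt : ∀ k ∈ F, ∀ l ∈ F, k < l → d k < d l → height k < height l := by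
    intro k hk l hl hkl hd
    obtain ⟨G, hG, hGk⟩ := Finset.exists_mem_eq_sup _ ⟨{k}, singleton_mem k hk⟩ Finset.card
    rw [Finset.mem_filter, Finset.mem_powerset] at hG
    obtain ⟨hGF, hGbelow, hGchain⟩ := hG
    have hGl : ∀ j ∈ G, j ≤ l := fun j hj => (hGbelow j hj).1.trans hkl.le
    have hmem : insert l G ∈ F.powerset.filter (IsChainBelow l) := by
      refine Finset.mem_filter.2 ⟨Finset.mem_powerset.2 (Finset.insert_subset hl hGF), ?_, ?_⟩
      · simp only [Finset.mem_insert, forall_eq_or_imp, le_refl, and_self, true_and]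
        exact fun j hj => ⟨hGl j hj, (hGbelow j hj).2.trans hd.le⟩
      · rw [Finset.coe_insert, strictMonoOn_insert_iff_of_forall_le hGl]
        exact ⟨fun j hj _ => (hGbelow j hj).2.trans_lt hd, hGchain⟩
    have hle : (insert l G).card ≤ height l := Finset.le_sup (f := Finset.card) hmem
    have hGk : height k = G.card := hGk
    rw [Finset.card_insert_of_notMem fun h => (hGbelow l h).1.not_gt hkl] at hle
    omega
  calc F.card ≤ p * (Finset.Icc 1 q).card := by
        refine Finset.card_le_mul_card_image_of_maps_to
          (fun k hk => Finset.mem_Icc.2 ⟨one_le_height k hk, height_le k⟩) p fun n _ => ?_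
        refine hp _ (Finset.filter_subset _ _) fun k hk l hl hkl => ?_
        rw [Finset.mem_coe, Finset.mem_filter] at hk hl
        rcases hkl.lt_or_eq with hkl | rfl
        · by_contra! hd
          exact (height_lt k hk.1 l hl.1 hkl hd).ne (hk.2.trans hl.2.symm)
        · exact le_rfl
    _ = p * q := by simp

section Morse

variable {X : Type*} [NormedAddCommGroup X] [NormedSpace ℝ X]

structure IsMorseSetOfRadius_s4 (lam : ℝ) (a : X) (r : ℝ) (S : Set X) : Prop where
  closedBall_subset : closedBall a r ⊆ S
  subset_closedBall : S ⊆ closedBall a (lam * r)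
  segment_subset : ∀ y ∈ closedBall a r, ∀ x ∈ S, segment ℝ y x ⊆ S

theorem IsMorseSet.exists_radius_le {lam R : ℝ} {a : X} {S : Set X} (h : IsMorseSet lam a S)
    (hlam : 1 ≤ lam) (hR : 0 < R) (hSR : S ⊆ closedBall a R) :
    ∃ r, 0 < r ∧ r ≤ R ∧ IsMorseSetOfRadius_s4 lam a r S := by
  obtain ⟨r, hr, hball, hS, hseg⟩ := h
  refine ⟨min r R, lt_min hr hR, min_le_right _ _, (closedBall_subset_closedBall
    (min_le_left _ _)).trans hball, fun x hx => ?_, fun y hy => hseg y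
    (closedBall_subset_closedBall (min_le_left _ _) hy)⟩
  rw [mem_closedBall, mul_min_of_nonneg _ _ (by linarith)]
  exact le_min (hS hx) ((hSR hx).trans (le_mul_of_one_le_left hR.le hlam))

theorem div_dist_lt_norm_sub_of_notMem {S : Set X} {a b x : X} {r : ℝ}
    (hseg : ∀ y ∈ closedBall a r, segment ℝ y x ⊆ S) (hx : x ∈ S) (hb : b ∉ S)
    (hba : dist b x ≤ dist a x) (hax : a ≠ x) :
    r / dist a x < ‖‖b - x‖⁻¹ • (b - x) - ‖a - x‖⁻¹ • (a - x)‖ := by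
  have hbx : b ≠ x := fun h => hb (h ▸ hx)
  have hda : 0 < ‖a - x‖ := norm_pos_iff.2 (sub_ne_zero.2 hax)
  have hdb : 0 < ‖b - x‖ := norm_pos_iff.2 (sub_ne_zero.2 hbx)
  rw [dist_eq_norm, dist_eq_norm] at hba
  rw [dist_eq_norm]
  set t := ‖b - x‖ / ‖a - x‖
  have ht : 0 < t := div_pos hdb hda
  -- otherwise `b` would lie on the segment from `x` to a point of `B(a,r)`
  have hfar : t * r < ‖b - x - t • (a - x)‖ := by
    by_contra! hle
    set y := a + t⁻¹ • (b - x - t • (a - x))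
    have hy : y ∈ closedBall a r := by
      rw [mem_closedBall, dist_eq_norm, add_sub_cancel_left, norm_smul, Real.norm_eq_abs,
        abs_of_pos (inv_pos.2 ht), inv_mul_le_iff₀ ht]
      exact hle
    refine hb (hseg y hy ⟨t, 1 - t, ht.le, ?_, by ring, ?_⟩)
    · linarith [(div_le_one hda).2 hba]
    · simp only [y, smul_add, smul_smul, mul_inv_cancel₀ ht.ne']
      module
  have hsub : ‖b - x‖⁻¹ • (b - x) - ‖a - x‖⁻¹ • (a - x)
      = ‖b - x‖⁻¹ • (b - x - t • (a - x)) := by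
    have : ‖b - x‖⁻¹ * t = ‖a - x‖⁻¹ := by rw [mul_div, inv_mul_cancel₀ hdb.ne', one_div]
    rw [← this, mul_smul, ← smul_sub]
  rw [hsub, norm_smul, Real.norm_eq_abs, abs_of_pos (inv_pos.2 hdb)]
  calc r / ‖a - x‖ = ‖b - x‖⁻¹ * (t * r) := by simp only [t]; field_simp
    _ < ‖b - x‖⁻¹ * ‖b - x - t • (a - x)‖ := mul_lt_mul_of_pos_left hfar (inv_pos.2 hdb)

end Morse

section Overlap

variable {X : Type*} [NormedAddCommGroup X] [NormedSpace ℝ X] {ι : Type} [LinearOrder ι]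
  {lam : ℝ} {c : ι → X} {r : ι → ℝ} {T : ι → Set X} {x : X} {G : Finset ι}

theorem card_le_of_dist_antitone {N : ℕ} (hN : IsPackingBound (closedBall (0 : X) 1) lam⁻¹ N)
    (hlam : 0 < lam) (hT : ∀ k, IsMorseSetOfRadius_s4 lam (c k) (r k) (T k))
    (hsep : ∀ k l, k < l → c l ∉ T k) (hx : ∀ k ∈ G, x ∈ T k)
    (hchain : AntitoneOn (fun k => dist (c k) x) G) :
    G.card ≤ N := by
  refine hN.card_le (p := fun k => ‖c k - x‖⁻¹ • (c k - x)) (fun k _ => ?_) ?_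
  · rw [mem_closedBall_zero_iff, norm_smul, norm_inv, norm_norm]
    rcases eq_or_ne ‖c k - x‖ 0 with h | h
    · simp [h]
    · rw [inv_mul_cancel₀ h]
  intro k hk l hl hkl
  have hck : c k ≠ x := by
    rintro rfl
    exact hsep k l hkl (dist_le_zero.1 (hchain hk hl hkl.le |>.trans_eq (dist_self _)) ▸ hx k hk)
  have hdk : 0 < dist (c k) x := dist_pos.2 hck
  have hfar : dist (c k) x ≤ lam * r k := by
    rw [dist_comm]; exact (hT k).subset_closedBall (hx k hk)
  calc lam⁻¹ ≤ r k / dist (c k) x := by rwa [le_div_iff₀ hdk, inv_mul_le_iff₀ hlam]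
    _ < _ := div_dist_lt_norm_sub_of_notMem (fun y hy => (hT k).segment_subset y hy x (hx k hk))
        (hx k hk) (hsep k l hkl) (hchain hk hl hkl.le) hck
    _ = _ := (dist_eq_norm _ _).symm

theorem card_le_of_dist_strictMono {N : ℕ}
    (hN : IsPackingBound (closedBall (0 : X) (2 * lam)) 1 N)
    (hT : ∀ k, IsMorseSetOfRadius_s4 lam (c k) (r k) (T k)) (hr : ∀ k, 0 < r k)
    (hsep : ∀ k l, k < l → c l ∉ T k) (hrad : ∀ k l, k < l → r l < 2 * r k)
    (hx : ∀ k ∈ G, x ∈ T k) (hchain : StrictMonoOn (fun k => dist (c k) x) G) :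
    G.card ≤ N := by
  rcases G.eq_empty_or_nonempty with rfl | hG
  · simp
  -- rescale by half the radius of the last set, which is smaller than all the other radii
  set m := G.max' hG
  obtain ⟨ρ, hρm⟩ : ∃ ρ, ρ = r m / 2 := ⟨_, rfl⟩
  have hρ : 0 < ρ := hρm ▸ half_pos (hr m)
  refine hN.card_le (p := fun k => ρ⁻¹ • (c k - x)) (fun k hk => ?_) fun k hk l hl hkl => ?_
  · have hkm : dist (c k) x ≤ dist (c m) x :=
      hchain.monotoneOn hk (G.max'_mem hG) (G.le_max' k hk)
    have hm : dist (c m) x ≤ lam * r m := by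
      rw [dist_comm]; exact (hT m).subset_closedBall (hx m (G.max'_mem hG))
    rw [mem_closedBall_zero_iff, norm_smul, norm_inv, Real.norm_of_nonneg hρ.le,
      inv_mul_le_iff₀ hρ, ← dist_eq_norm, hρm]
    linarith
  · have hkm : k < m := hkl.trans_le (G.le_max' l hl)
    have hρk : ρ < r k := by linarith [hrad k m hkm]
    have hkl' : r k < dist (c l) (c k) := by
      by_contra! h
      exact hsep k l hkl ((hT k).closedBall_subset h)
    rw [dist_smul₀, Real.norm_of_nonneg (inv_nonneg.2 hρ.le), dist_sub_right,
      lt_inv_mul_iff₀ hρ, mul_one]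
    linarith

theorem card_le_mul_of_forall_mem {N₁ N₂ : ℕ}
    (hN₁ : IsPackingBound (closedBall (0 : X) 1) lam⁻¹ N₁)
    (hN₂ : IsPackingBound (closedBall (0 : X) (2 * lam)) 1 N₂) (hlam : 0 < lam)
    (hT : ∀ k, IsMorseSetOfRadius_s4 lam (c k) (r k) (T k)) (hr : ∀ k, 0 < r k)
    (hsep : ∀ k l, k < l → c l ∉ T k) (hrad : ∀ k l, k < l → r l < 2 * r k)
    (hx : ∀ k ∈ G, x ∈ T k) :
    G.card ≤ N₁ * N₂ :=
  G.card_le_mul_of_chain_bounds (fun k => dist (c k) x)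
    (fun _ hG' hchain => card_le_of_dist_antitone hN₁ hlam hT hsep (fun k hk => hx k (hG' hk))
      hchain)
    (fun _ hG' hchain => card_le_of_dist_strictMono hN₂ hT hr hsep hrad
      (fun k hk => hx k (hG' hk)) hchain)

end Overlap

theorem Set.Nonempty.exists_sSup_image_div_two_lt {α : Type*} {A : Set α} (hA : A.Nonempty)
    {r : α → ℝ} (hr : ∀ a ∈ A, 0 < r a) (hbdd : BddAbove (r '' A)) :
    ∃ a ∈ A, sSup (r '' A) / 2 < r a := by
  obtain ⟨a, ha⟩ := hA
  have hpos : 0 < sSup (r '' A) := (hr a ha).trans_le (le_csSup hbdd ⟨a, ha, rfl⟩)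
  obtain ⟨_, ⟨b, hb, rfl⟩, hlt⟩ :=
    exists_lt_of_lt_csSup (Set.Nonempty.image r ⟨a, ha⟩) (half_lt_self hpos)
  exact ⟨b, hb, hlt⟩

theorem TotallyBounded.exists_greedy_cover {X : Type*} [PseudoMetricSpace X] {E : Set X}
    (hE : TotallyBounded E) {r : X → ℝ} (hr : ∀ a ∈ E, 0 < r a) (hbdd : BddAbove (r '' E))
    {S : X → Set X} (hS : ∀ a ∈ E, closedBall a (r a) ⊆ S a) :
    ∃ (I : Set ℕ) (c : I → X), (∀ k, c k ∈ E) ∧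
      (∀ k l, k < l → c l ∉ S (c k) ∧ r (c l) < 2 * r (c k)) ∧ E ⊆ ⋃ k, S (c k) := by
  rcases E.eq_empty_or_nonempty with rfl | ⟨a₀, -⟩
  · exact ⟨∅, fun k => k.2.elim, fun k => k.2.elim, fun k => k.2.elim, empty_subset _⟩
  have : Nonempty X := ⟨a₀⟩
  have hpick : ∀ A ⊆ E, A.Nonempty → ∃ a ∈ A, sSup (r '' A) / 2 < r a := fun A hAE hA =>
    hA.exists_sSup_image_div_two_lt (fun a ha => hr a (hAE ha)) (hbdd.mono (image_mono hAE))
  choose! Φ hΦA hΦr using hpick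
  -- `rem k` is what is left of `E` after `k` steps; the selection stops when it is empty.
  let rem : ℕ → Set X := fun k => Nat.rec E (fun _ A => A \ S (Φ A)) k
  have rem_succ : ∀ k, rem (k + 1) = rem k \ S (Φ (rem k)) := fun _ => rfl
  have rem_subset : ∀ k, rem k ⊆ E := by
    intro k
    induction k with
    | zero => exact subset_rfl
    | succ k ih => exact sdiff_subset.trans ih
  have rem_anti : Antitone rem := antitone_nat_of_succ_le fun k => sdiff_subset
  have mem_rem : ∀ k, (rem k).Nonempty → Φ (rem k) ∈ rem k := fun k hk =>
    hΦA _ (rem_subset k) hk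
  have lt_two_mul : ∀ k, ∀ a ∈ rem k, r a < 2 * r (Φ (rem k)) := fun k a ha => by
    have := hΦr _ (rem_subset k) ⟨a, ha⟩
    linarith [le_csSup (hbdd.mono (image_mono (rem_subset k))) ⟨a, ha, rfl⟩]
  have later : ∀ k l, k < l → (rem l).Nonempty →
      Φ (rem l) ∈ rem k ∧ Φ (rem l) ∉ S (Φ (rem k)) := fun k l hkl hl => by
    have := rem_anti (Nat.succ_le_of_lt hkl) (mem_rem l hl)
    rwa [rem_succ] at this
  refine ⟨{k | (rem k).Nonempty}, fun k => Φ (rem k), fun k => rem_subset k (mem_rem k k.2),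
    fun k l hkl => ⟨(later k l hkl l.2).2, lt_two_mul k _ (later k l hkl l.2).1⟩, ?_⟩
  intro a ha
  by_contra hcov
  have mem : ∀ k, a ∈ rem k := by
    intro k
    induction k with
    | zero => exact ha
    | succ k ih => exact ⟨ih, fun h => hcov (mem_iUnion.2 ⟨⟨k, a, ih⟩, h⟩)⟩
  -- the selected centres would form an infinite `r a / 2`-separated subset of `E`
  obtain ⟨N, hN⟩ := hE.exists_isPackingBound (half_pos (hr a ha))
  have hcard := hN.card_le (G := Finset.range (N + 1)) (p := fun k => Φ (rem k))
    (fun k _ => rem_subset k (mem_rem k ⟨a, mem k⟩)) fun k _ l _ hkl => by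
      have hfar : r (Φ (rem k)) < dist (Φ (rem l)) (Φ (rem k)) := by
        by_contra! h
        exact (later k l hkl ⟨a, mem l⟩).2 (hS _ (rem_subset k (mem_rem k ⟨a, mem k⟩)) h)
      linarith [lt_two_mul k a (mem k)]
  simp at hcard

theorem tsum_measure_le_of_forall_card_le {α ι : Type*} [MeasurableSpace α] [Countable ι]
    (μ : Measure α) {A : ι → Set α} {V : Set α} (hA : ∀ i, MeasurableSet (A i))
    (hAV : ∀ i, A i ⊆ V) {N : ℕ} (hN : ∀ x, ∀ G : Finset ι, (∀ i ∈ G, x ∈ A i) → G.card ≤ N) :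
    ∑' i, μ (A i) ≤ N * μ V := by
  classical
  have hpt : ∀ x, ∑' i, (A i).indicator 1 x ≤ V.indicator (fun _ => (N : ℝ≥0∞)) x := by
    intro x
    by_cases hx : x ∈ V
    · rw [indicator_of_mem hx, ENNReal.tsum_eq_iSup_sum]
      refine iSup_le fun G => ?_
      simp only [indicator_apply, Pi.one_apply, Finset.sum_boole]
      exact_mod_cast hN x _ fun i hi => (Finset.mem_filter.1 hi).2
    · simp [indicator_of_notMem hx, indicator_of_notMem fun h => hx (hAV _ h)]
  calc ∑' i, μ (A i) = ∫⁻ x, ∑' i, (A i).indicator 1 x ∂μ := by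
        rw [lintegral_tsum fun i => (measurable_one.indicator (hA i)).aemeasurable]
        simp [lintegral_indicator_one (hA _)]
    _ ≤ ∫⁻ x, V.indicator (fun _ => (N : ℝ≥0∞)) x ∂μ := lintegral_mono hpt
    _ ≤ N * μ V := lintegral_indicator_const_le V _

section DensityPt

variable {X : Type*} [PseudoMetricSpace X] [MeasurableSpace X]

def IsDensityPtWith (μ : Measure X) (𝒮 : Set (X × Set X)) (C : Set X) (ε : ℝ) (a : X) : Prop :=
  ∃ R > (0 : ℝ), ∀ S : Set X, (a, S) ∈ 𝒮 → S ⊆ closedBall a R →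
    μ (S \ C) ≤ ENNReal.ofReal ε * μ S

def IsDensityPt (μ : Measure X) (𝒮 : Set (X × Set X)) (C : Set X) (a : X) : Prop :=
  ∀ ε > (0 : ℝ), IsDensityPtWith μ 𝒮 C ε a

theorem IsDensityPtWith.mono {μ : Measure X} {𝒮 : Set (X × Set X)} {C : Set X} {ε ε' : ℝ}
    {a : X} (h : IsDensityPtWith μ 𝒮 C ε a) (hε : ε ≤ ε') : IsDensityPtWith μ 𝒮 C ε' a :=
  let ⟨R, hR, hRS⟩ := h
  ⟨R, hR, fun S hS hSR => (hRS S hS hSR).trans (by gcongr)⟩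

end DensityPt

section Density

variable {X : Type*} [NormedAddCommGroup X] [NormedSpace ℝ X] [ProperSpace X]
  [MeasurableSpace X] {μ : Measure X} {lam : ℝ} {𝒮 : Set (X × Set X)}

theorem ofReal_mul_measure_le_of_not_isDensityPtWith (hlam : 1 ≤ lam)
    (h𝒮 : ∀ p ∈ 𝒮, IsMorseSet lam p.1 p.2 ∧ MeasurableSet p.2) {N₁ N₂ : ℕ}
    (hN₁ : IsPackingBound (closedBall (0 : X) 1) lam⁻¹ N₁)
    (hN₂ : IsPackingBound (closedBall (0 : X) (2 * lam)) 1 N₂)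
    {C E U : Set X} {ε : ℝ} (hC : MeasurableSet C) (hE : Bornology.IsBounded E) (hU : IsOpen U)
    (hEU : E ⊆ U) (hbad : ∀ a ∈ E, ¬IsDensityPtWith μ 𝒮 C ε a) :
    ENNReal.ofReal ε * μ E ≤ (N₁ * N₂ : ℕ) * μ (U \ C) := by
  have hsel : ∀ a ∈ E, ∃ S r, (a, S) ∈ 𝒮 ∧ 0 < r ∧ r ≤ 1 ∧ IsMorseSetOfRadius_s4 lam a r S ∧
      S ⊆ U ∧ ENNReal.ofReal ε * μ S < μ (S \ C) := by
    intro a ha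
    obtain ⟨ρ, hρ, hρU⟩ := Metric.isOpen_iff.1 hU a (hEU ha)
    have hR : 0 < min 1 (ρ / 2) := lt_min one_pos (half_pos hρ)
    have hsmall : ∀ R > 0, ∃ S, (a, S) ∈ 𝒮 ∧ S ⊆ closedBall a R ∧
        ENNReal.ofReal ε * μ S < μ (S \ C) := by
      simpa [IsDensityPtWith] using hbad a ha
    obtain ⟨S, hS𝒮, hSR, hSbad⟩ := hsmall _ hR
    obtain ⟨r, hr, hrR, hmorse⟩ := (h𝒮 _ hS𝒮).1.exists_radius_le hlam hR hSR
    refine ⟨S, r, hS𝒮, hr, hrR.trans (min_le_left _ _), hmorse, hSR.trans ?_, hSbad⟩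
    exact (closedBall_subset_ball ((min_le_right _ _).trans_lt (half_lt_self hρ))).trans hρU
  choose! S r hS𝒮 hr hr1 hmorse hSU hSbad using hsel
  obtain ⟨I, c, hcE, hsep, hcov⟩ :=
    (hE.isCompact_closure.totallyBounded.subset subset_closure).exists_greedy_cover hr
      ⟨1, forall_mem_image.2 hr1⟩ fun a ha => (hmorse a ha).closedBall_subset
  have hoverlap : ∀ x, ∀ G : Finset I, (∀ k ∈ G, x ∈ S (c k) \ C) → G.card ≤ N₁ * N₂ :=
    fun x G hx => card_le_mul_of_forall_mem hN₁ hN₂ (by linarith) (fun k => hmorse _ (hcE k))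
      (fun k => hr _ (hcE k)) (fun k l h => (hsep k l h).1) (fun k l h => (hsep k l h).2)
      fun k hk => (hx k hk).1
  calc ENNReal.ofReal ε * μ E ≤ ENNReal.ofReal ε * ∑' k, μ (S (c k)) := by
        gcongr; exact (measure_mono hcov).trans (measure_iUnion_le _)
    _ = ∑' k, ENNReal.ofReal ε * μ (S (c k)) := ENNReal.tsum_mul_left.symm
    _ ≤ ∑' k, μ (S (c k) \ C) := ENNReal.tsum_le_tsum fun k => (hSbad _ (hcE k)).le
    _ ≤ (N₁ * N₂ : ℕ) * μ (U \ C) := tsum_measure_le_of_forall_card_le μ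
        (fun k => (h𝒮 _ (hS𝒮 _ (hcE k))).2.diff hC)
        (fun k => sdiff_subset_sdiff_left (hSU _ (hcE k))) hoverlap

variable [OpensMeasurableSpace X] [μ.Regular]

theorem measure_eq_zero_of_not_isDensityPtWith (hlam : 1 ≤ lam)
    (h𝒮 : ∀ p ∈ 𝒮, IsMorseSet lam p.1 p.2 ∧ MeasurableSet p.2)
    {C E : Set X} {ε : ℝ} (hε : 0 < ε) (hC : MeasurableSet C)
    (hE : Bornology.IsBounded E) (hEC : E ⊆ C)
    (hbad : ∀ a ∈ E, ¬IsDensityPtWith μ 𝒮 C ε a) :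
    μ E = 0 := by
  obtain ⟨N₁, hN₁⟩ := (isCompact_closedBall (0 : X) 1).totallyBounded.exists_isPackingBound
    (inv_pos.2 (by linarith : (0 : ℝ) < lam))
  obtain ⟨N₂, hN₂⟩ :=
    (isCompact_closedBall (0 : X) (2 * lam)).totallyBounded.exists_isPackingBound one_pos
  obtain ⟨R, hER⟩ := hE.subset_closedBall 0
  have hC' : μ (C ∩ closedBall 0 R) ≠ ∞ :=
    (measure_mono inter_subset_right |>.trans_lt (isCompact_closedBall _ R).measure_lt_top).ne
  have key : ∀ δ : ℝ≥0∞, δ ≠ 0 → ENNReal.ofReal ε * μ E ≤ (N₁ * N₂ : ℕ) * δ := by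
    intro δ hδ
    obtain ⟨U, hCU, hU, -, hUδ⟩ :=
      (hC.inter measurableSet_closedBall).exists_isOpen_sdiff_lt hC' hδ
    calc ENNReal.ofReal ε * μ E ≤ (N₁ * N₂ : ℕ) * μ (U \ C) :=
          ofReal_mul_measure_le_of_not_isDensityPtWith hlam h𝒮 hN₁ hN₂ hC hE hU
            ((subset_inter hEC hER).trans hCU) hbad
      _ ≤ (N₁ * N₂ : ℕ) * δ := by
          gcongr
          exact (measure_mono (sdiff_subset_sdiff_right inter_subset_left)).trans hUδ.le
  have : ENNReal.ofReal ε * μ E = 0 := by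
    refine le_antisymm (ENNReal.le_of_forall_pos_le_add fun η hη _ => ?_) zero_le
    rw [zero_add]
    refine (key _ (ENNReal.div_pos ?_ (ENNReal.natCast_ne_top _)).ne').trans ENNReal.mul_div_le
    exact_mod_cast hη.ne'
  simpa [hε.not_ge] using this

theorem ae_isDensityPt (hlam : 1 ≤ lam)
    (h𝒮 : ∀ p ∈ 𝒮, IsMorseSet lam p.1 p.2 ∧ MeasurableSet p.2)
    {C : Set X} (hC : MeasurableSet C) : ∀ᵐ a ∂μ, a ∈ C → IsDensityPt μ 𝒮 C a := by
  let E (n m : ℕ) : Set X := {a ∈ C ∩ ball 0 m | ¬IsDensityPtWith μ 𝒮 C (1 / (n + 1)) a}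
  have hE : ∀ n m, μ (E n m) = 0 := fun n m =>
    measure_eq_zero_of_not_isDensityPtWith hlam h𝒮 Nat.one_div_pos_of_nat hC
      (isBounded_ball.subset fun a ha => ha.1.2) (fun a ha => ha.1.1) fun a ha => ha.2
  have : ∀ᵐ a ∂μ, ∀ n m, a ∉ E n m := by
    simpa only [ae_all_iff] using fun n m => measure_eq_zero_iff_ae_notMem.1 (hE n m)
  filter_upwards [this] with a ha haC ε hε
  obtain ⟨n, hn⟩ := exists_nat_one_div_lt hε
  obtain ⟨m, hm⟩ := exists_nat_gt ‖a‖
  have : IsDensityPtWith μ 𝒮 C (1 / (n + 1)) a :=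
    not_not.1 fun h => ha n m ⟨⟨haC, mem_ball_zero_iff.2 hm⟩, h⟩
  exact this.mono hn.le

theorem ae_isDensityPt_of_nullMeasurableSet (hlam : 1 ≤ lam)
    (h𝒮 : ∀ p ∈ 𝒮, IsMorseSet lam p.1 p.2 ∧ MeasurableSet p.2) {Ω D : Set X}
    (hΩ : MeasurableSet Ω) (hD : NullMeasurableSet D (μ.restrict Ω)) :
    ∀ᵐ a ∂μ, a ∈ Ω → a ∈ D → IsDensityPt μ 𝒮 D a := by
  obtain ⟨C, hCD, hC, hCDae⟩ := hD.exists_measurable_subset_ae_eq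
  filter_upwards [ae_isDensityPt hlam h𝒮 hC, (ae_restrict_iff' hΩ).1 hCDae.mem_iff]
    with a hdens hDC hΩa hDa ε hε
  obtain ⟨R, hR, hRS⟩ := hdens ((hDC hΩa).2 hDa) ε hε
  exact ⟨R, hR, fun S hS hSR =>
    (measure_mono (sdiff_subset_sdiff_right hCD)).trans (hRS S hS hSR)⟩

end Density

theorem MuMeasurable.aestronglyMeasurable {X Y : Type*} [MeasurableSpace X]
    [NormedAddCommGroup Y] {μ : Measure X} {f : X → Y} (hf : MuMeasurable μ f) :
    AEStronglyMeasurable f μ :=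
  let ⟨F, hF⟩ := hf
  aestronglyMeasurable_of_tendsto_ae atTop (fun n => (F n).aestronglyMeasurable) hF

theorem isApproxContPt_of_forall_isDensityPt {X Y : Type*} [NormedAddCommGroup X]
    [MeasurableSpace X] [NormedAddCommGroup Y] {μ : Measure X} {𝒮 : Set (X × Set X)}
    {f : X → Y} {a : X} {V : Set Y} (hfa : f a ∈ closure V)
    (h : ∀ v ∈ V, ∀ n : ℕ, ‖f a - v‖ < 1 / (n + 1) →
      IsDensityPt μ 𝒮 {x | ‖f x - v‖ < 1 / (n + 1)} a) :
    IsApproxContPt μ 𝒮 f a := by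
  intro ε hε η hη
  obtain ⟨n, hn⟩ := exists_nat_one_div_lt (half_pos hη)
  obtain ⟨v, hv, hav⟩ := Metric.mem_closure_iff.1 hfa _ Nat.one_div_pos_of_nat
  rw [dist_eq_norm] at hav
  obtain ⟨R, hR, hRS⟩ := h v hv n hav ε hε
  have hsub : ∀ S, {x ∈ S | η < ‖f a - f x‖} ⊆ S \ {x | ‖f x - v‖ < 1 / (n + 1)} := by
    refine fun S x hx => ⟨hx.1, fun hxv => ?_⟩
    have := norm_sub_le_norm_sub_add_norm_sub (f a) v (f x)
    rw [norm_sub_rev v] at this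
    linarith [hx.2, show ‖f x - v‖ < 1 / (n + 1) from hxv]
  exact ⟨R, hR, fun S hS hSR => (measure_mono (hsub S)).trans (hRS S hS hSR)⟩

theorem ae_isApproxContPt_general
    {X Y : Type*} [NormedAddCommGroup X] [NormedSpace ℝ X] [FiniteDimensional ℝ X]
    [MeasurableSpace X] [OpensMeasurableSpace X]
    [NormedAddCommGroup Y]
    (μ : Measure X) [μ.Regular]
    (lam : ℝ) (hlam : 1 ≤ lam) (Ω : Set X) (hΩ : IsOpen Ω)
    (𝒮 : Set (X × Set X)) (h𝒮 : IsAEMorseCover μ lam Ω 𝒮)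
    (f : X → Y) (hf : MuMeasurable (μ.restrict Ω) f) :
    μ {a ∈ Ω | ¬ IsApproxContPt μ 𝒮 f a} = 0 := by
  have hΩm := hΩ.measurableSet
  have h𝒮' : ∀ p ∈ 𝒮, IsMorseSet lam p.1 p.2 ∧ MeasurableSet p.2 :=
    fun p hp => ⟨(h𝒮.1.1 p hp).1, (h𝒮.1.1 p hp).2.1⟩
  have hfm : AEStronglyMeasurable f (μ.restrict Ω) := hf.aestronglyMeasurable
  obtain ⟨t, ⟨V, hV, htV⟩, hft⟩ := hfm.isSeparable_ae_range
  have hfV : ∀ᵐ a ∂μ, a ∈ Ω → f a ∈ closure V :=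
    (ae_restrict_iff' hΩm).1 (hft.mono fun a ha => htV ha)
  have hdens : ∀ᵐ a ∂μ, ∀ v ∈ V, ∀ n : ℕ, a ∈ Ω → ‖f a - v‖ < 1 / (n + 1) →
      IsDensityPt μ 𝒮 {x | ‖f x - v‖ < 1 / (n + 1)} a := by
    refine (ae_ball_iff hV).2 fun v _ => ae_all_iff.2 fun n => ?_
    exact ae_isDensityPt_of_nullMeasurableSet hlam h𝒮' hΩm
      (nullMeasurableSet_lt (hfm.sub aestronglyMeasurable_const).norm.aemeasurable
        aemeasurable_const)
  have hgood : ∀ᵐ a ∂μ, a ∈ Ω → IsApproxContPt μ 𝒮 f a := by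
    filter_upwards [hfV, hdens] with a hfa hd ha
    exact isApproxContPt_of_forall_isDensityPt (hfa ha) fun v hv n => hd v hv n ha
  refine measure_mono_null ?_ (ae_iff.1 hgood)
  rintro a ⟨ha, hbad⟩ h
  exact hbad (h ha)

/-- If `𝒮` is a `μ`-a.e. `λ`-Morse cover of an open set `Ω ⊆ X`, `Y` a Banach space,
and `f : Ω → Y` is `μ`-measurable, then `μ`-almost every point of `Ω` is a point of
approximate continuity of `f`. -/
theorem ae_isApproxContPt
    {X Y : Type*} [NormedAddCommGroup X] [NormedSpace ℝ X] [FiniteDimensional ℝ X]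
    [MeasurableSpace X] [OpensMeasurableSpace X]
    [NormedAddCommGroup Y] [NormedSpace ℝ Y] [CompleteSpace Y]
    (μ : Measure X) [μ.Regular] [μ.IsComplete]
    (lam : ℝ) (hlam : 1 ≤ lam) (Ω : Set X) (hΩ : IsOpen Ω)
    (𝒮 : Set (X × Set X)) (h𝒮 : IsAEMorseCover μ lam Ω 𝒮)
    (f : X → Y) (hf : MuMeasurable (μ.restrict Ω) f) :
    μ {a ∈ Ω | ¬ IsApproxContPt μ 𝒮 f a} = 0 :=
  ae_isApproxContPt_general μ lam hlam Ω hΩ 𝒮 h𝒮 f hf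
end

section
/- Let Y be a Banach space, f : X → Y μ-measurable with ‖f‖ μ-integrable on X, A ⊆ X a μ-null set, and ε > 0. Then there is a gauge function δ : A → (0,1] such that for every finite or countably infinite pairwise disjoint sequence of measurable sets ⟨S_i⟩ with associated points x_i ∈ A satisfying S_i ⊆ B(x_i, δ(x_i)) for each i, one has Σ_i ‖f(x_i)‖·μ(S_i) ≤ ε and ∫_{∪_i S_i} ‖f‖ dμ ≤ ε. -/
open MeasureTheory Set Metric Filter

/-!
The points of `A` are sorted by the integer part `n` of `‖f‖`. Since `A` is null, outer
regularity gives open sets `Uₙ ⊇ A` with `∑ (n + 1) μ(Uₙ)` as small as we like; the gauge makes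
the ball around a point of `A` of level `n` lie in `Uₙ`. A disjoint fine family then has
`∑ ‖f(xᵢ)‖ μ(Sᵢ) ≤ ∑ (n + 1) μ(Uₙ)` and total measure at most `∑ μ(Uₙ)`, and absolute continuity
of `∫ ‖f‖` turns the latter into the integral bound.
-/

open scoped ENNReal NNReal Topology

theorem exists_gauge_closedBall_subset {X : Type*} [PseudoMetricSpace X] {A : Set X}
    (V : X → Set X) (hV : ∀ a ∈ A, V a ∈ 𝓝 a) :
    ∃ δ : X → ℝ, ∀ a ∈ A, δ a ∈ Ioc (0 : ℝ) 1 ∧ closedBall a (δ a) ⊆ V a := by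
  have h : ∀ a ∈ A, ∃ r, 0 < r ∧ closedBall a r ⊆ V a := fun a ha =>
    nhds_basis_closedBall.mem_iff.1 (hV a ha)
  choose! r hr_pos hr_sub using h
  refine ⟨fun a => min (r a) 1, fun a ha => ⟨⟨lt_min (hr_pos a ha) one_pos, min_le_right _ _⟩, ?_⟩⟩
  exact (closedBall_subset_closedBall (min_le_left _ _)).trans (hr_sub a ha)

theorem exists_isOpen_superset_tsum_mul_measure_lt {X ι : Type*} [MeasurableSpace X]
    [TopologicalSpace X] [Countable ι] {μ : Measure X} [μ.OuterRegular] {A : Set X}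
    (hA : μ A = 0) (w : ι → ℝ≥0∞) (hw : ∀ i, w i ≠ ∞) {c : ℝ≥0∞} (hc : c ≠ 0) :
    ∃ U : ι → Set X, (∀ i, IsOpen (U i) ∧ A ⊆ U i) ∧ ∑' i, w i * μ (U i) < c := by
  obtain ⟨r, hr_pos, hr_sum⟩ := ENNReal.exists_pos_tsum_mul_lt_of_countable hc w hw
  have h : ∀ i, ∃ U ⊇ A, IsOpen U ∧ μ U < r i := fun i =>
    A.exists_isOpen_lt_of_lt _ (hA ▸ ENNReal.coe_pos.2 (hr_pos i))
  choose U hAU hU_open hU_lt using h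
  refine ⟨U, fun i => ⟨hU_open i, hAU i⟩, lt_of_le_of_lt ?_ hr_sum⟩
  exact ENNReal.tsum_le_tsum fun i => by gcongr; exact (hU_lt i).le

theorem tsum_mul_measure_le_of_subset {X ι κ : Type*} [MeasurableSpace X] [Countable ι]
    {μ : Measure X} {I : Set ι} {S : ι → Set X} {U : κ → Set X} (k : ι → κ) (c : κ → ℝ≥0∞)
    (hS : ∀ i ∈ I, MeasurableSet (S i)) (hdisj : I.PairwiseDisjoint S)
    (hSU : ∀ i ∈ I, S i ⊆ U (k i)) :
    ∑' i : I, c (k i) * μ (S i) ≤ ∑' n, c n * μ (U n) := by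
  calc ∑' i : I, c (k i) * μ (S i)
      = ∑' n, ∑' i : {i : I // k i = n}, c (k i) * μ (S i) := by
        rw [← (Equiv.sigmaFiberEquiv fun i : I => k i).tsum_eq, ENNReal.tsum_sigma']
        rfl
    _ = ∑' n, c n * μ (⋃ i : {i : I // k i = n}, S i) := by
        refine tsum_congr fun n => ?_
        have hdisj' : Pairwise (Function.onFun Disjoint fun i : {i : I // k i = n} => S i) :=
          fun i j hij => hdisj i.1.2 j.1.2 fun h => hij (Subtype.ext (Subtype.ext h))
        rw [measure_iUnion hdisj' (fun i => hS i i.1.2), ← ENNReal.tsum_mul_left]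
        exact tsum_congr fun i => by rw [i.2]
    _ ≤ ∑' n, c n * μ (U n) := by
        refine ENNReal.tsum_le_tsum fun n => ?_
        gcongr
        exact iUnion_subset fun i => by simpa only [i.2] using hSU i i.1.2

theorem enorm_le_floor_norm_add_one {Y : Type*} [NormedAddCommGroup Y] (y : Y) :
    ‖y‖ₑ ≤ (⌊‖y‖⌋₊ : ℝ≥0∞) + 1 := by
  rw [← ofReal_norm, ← ENNReal.ofReal_natCast, ← ENNReal.ofReal_one,
    ← ENNReal.ofReal_add (Nat.cast_nonneg _) zero_le_one]
  exact ENNReal.ofReal_le_ofReal (Nat.lt_floor_add_one _).le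

theorem gauge_small_on_null_set_general
    {X Y : Type*} [NormedAddCommGroup X] [MeasurableSpace X] [NormedAddCommGroup Y]
    (μ : Measure X) [μ.Regular] (f : X → Y)
    (hint : Integrable (fun x => ‖f x‖) μ)
    (A : Set X) (hA : μ A = 0)
    (ε : ℝ) (hε : 0 < ε) :
    ∃ δ : X → ℝ, (∀ x ∈ A, δ x ∈ Set.Ioc (0:ℝ) 1) ∧
      ∀ (I : Set ℕ) (x : ℕ → X) (S : ℕ → Set X),
        (∀ i ∈ I, x i ∈ A ∧ MeasurableSet (S i) ∧
          S i ⊆ Metric.closedBall (x i) (δ (x i))) →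
        (∀ i ∈ I, ∀ j ∈ I, i ≠ j → Disjoint (S i) (S j)) →
        (∑' i : I, (‖f (x i)‖₊ : ENNReal) * μ (S i)) ≤ ENNReal.ofReal ε ∧
        ∫⁻ y in ⋃ i ∈ I, S i, ‖f y‖₊ ∂μ ≤ ENNReal.ofReal ε := by
  obtain ⟨η, hη_pos, hη⟩ := exists_pos_setLIntegral_lt_of_measure_lt
    ((hasFiniteIntegral_norm_iff f).1 hint.hasFiniteIntegral).ne (ENNReal.ofReal_pos.2 hε).ne'
  obtain ⟨U, hU, hU_sum⟩ := exists_isOpen_superset_tsum_mul_measure_lt hA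
    (fun n : ℕ => (n : ℝ≥0∞) + 1) (fun n => by simp)
    (lt_min (ENNReal.ofReal_pos.2 hε) hη_pos).ne'
  obtain ⟨δ, hδ⟩ := exists_gauge_closedBall_subset (fun a => U ⌊‖f a‖⌋₊)
    fun a ha => (hU _).1.mem_nhds ((hU _).2 ha)
  refine ⟨δ, fun a ha => (hδ a ha).1, fun I x S hS hdisj => ?_⟩
  have hSU : ∀ i ∈ I, S i ⊆ U ⌊‖f (x i)‖⌋₊ := fun i hi =>
    (hS i hi).2.2.trans (hδ _ (hS i hi).1).2
  constructor
  · calc ∑' i : I, (‖f (x i)‖₊ : ℝ≥0∞) * μ (S i)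
        ≤ ∑' i : I, ((⌊‖f (x i)‖⌋₊ : ℕ) + 1 : ℝ≥0∞) * μ (S i) :=
          ENNReal.tsum_le_tsum fun i => by gcongr; exact enorm_le_floor_norm_add_one _
      _ ≤ ∑' n : ℕ, ((n : ℝ≥0∞) + 1) * μ (U n) :=
          tsum_mul_measure_le_of_subset (fun i => ⌊‖f (x i)‖⌋₊) (fun n => (n : ℝ≥0∞) + 1)
            (fun i hi => (hS i hi).2.1) (fun i hi j hj => hdisj i hi j hj) hSU
      _ ≤ ENNReal.ofReal ε := (hU_sum.trans_le (min_le_left _ _)).le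
  · refine (hη _ ?_).le
    calc μ (⋃ i ∈ I, S i) ≤ μ (⋃ n, U n) :=
          measure_mono (iUnion₂_subset fun i hi => (hSU i hi).trans (subset_iUnion U _))
      _ ≤ ∑' n, μ (U n) := measure_iUnion_le U
      _ ≤ ∑' n : ℕ, ((n : ℝ≥0∞) + 1) * μ (U n) :=
          ENNReal.tsum_le_tsum fun n => le_mul_of_one_le_left' le_add_self
      _ < η := hU_sum.trans_le (min_le_right _ _)

/-- Let `Y` be a Banach space, `f : X → Y` `μ`-measurable with `‖f‖` `μ`-integrable,
`A ⊆ X` a `μ`-null set, and `ε > 0`.  Then there is a gauge `δ : A → (0,1]` such that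
for every finite or countably infinite pairwise disjoint sequence of measurable sets
`⟨S_i⟩` with associated points `x_i ∈ A` satisfying `S_i ⊆ B(x_i, δ(x_i))`, one has
`Σ_i ‖f(x_i)‖·μ(S_i) ≤ ε` and `∫_{∪_i S_i} ‖f‖ dμ ≤ ε`. -/
theorem gauge_small_on_null_set
    {X Y : Type*} [NormedAddCommGroup X] [NormedSpace ℝ X] [FiniteDimensional ℝ X]
    [MeasurableSpace X] [OpensMeasurableSpace X]
    [NormedAddCommGroup Y] [NormedSpace ℝ Y] [CompleteSpace Y]
    (μ : Measure X) [μ.Regular] [μ.IsComplete]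
    (f : X → Y) (hf : MuMeasurable μ f)
    (hint : Integrable (fun x => ‖f x‖) μ)
    (A : Set X) (hA : μ A = 0)
    (ε : ℝ) (hε : 0 < ε) :
    ∃ δ : X → ℝ, (∀ x ∈ A, δ x ∈ Set.Ioc (0:ℝ) 1) ∧
      ∀ (I : Set ℕ) (x : ℕ → X) (S : ℕ → Set X),
        (∀ i ∈ I, x i ∈ A ∧ MeasurableSet (S i) ∧
          S i ⊆ Metric.closedBall (x i) (δ (x i))) →
        (∀ i ∈ I, ∀ j ∈ I, i ≠ j → Disjoint (S i) (S j)) →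
        (∑' i : I, (‖f (x i)‖₊ : ENNReal) * μ (S i)) ≤ ENNReal.ofReal ε ∧
        ∫⁻ y in ⋃ i ∈ I, S i, ‖f y‖₊ ∂μ ≤ ENNReal.ofReal ε :=
  gauge_small_on_null_set_general μ f hint A hA ε hε
end

section
/- Let 𝒮 be a μ-a.e. λ-Morse cover of X, Y a Banach space, and f : X → Y μ-measurable with ‖f‖ μ-integrable on X. Let L ⊆ X be the set of points x that are Lebesgue points of f with respect to f(x), and let ε > 0. Then there is a gauge function δ : L → (0,1] such that for every finite or countably infinite pairwise disjoint sequence ⟨S_i(x_i)⟩ of δ-fine sets from 𝒮 with tags x_i ∈ L, one has Σ_i ∫_{S_i} ‖f(y) − f(x_i)‖ dμ(y) < ε. -/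
open MeasureTheory Set Metric Filter

/-!
Weight the Lebesgue-point estimate at a tag `x` by `c n > 0`, where `n = ⌈‖x‖⌉₊` and
`∑ₙ c n · μ(B(0, n + 1)) < ε` (closed balls have finite measure). A `1`-fine set tagged in shell
`n` lies in `B(0, n + 1)`, and disjoint such sets have total measure at most `μ(B(0, n + 1))`,
so the whole sum is bounded by `∑ₙ c n · μ(B(0, n + 1))`.
-/

open Function
open scoped ENNReal

theorem tsum_mul_measure_le_of_pairwise_disjoint {X ι κ : Type*} [MeasurableSpace X]
    (μ : Measure X) {S : ι → Set X} (hS : ∀ i, MeasurableSet (S i))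
    (hd : Pairwise (Disjoint on S)) {k : ι → κ} {K : κ → Set X} (hK : ∀ i, S i ⊆ K (k i))
    (c : κ → ℝ≥0∞) :
    ∑' i, c (k i) * μ (S i) ≤ ∑' n, c n * μ (K n) := by
  rw [← ENNReal.tsum_fiberwise _ k]
  refine ENNReal.tsum_le_tsum fun n => ?_
  calc ∑' i : k ⁻¹' {n}, c (k i) * μ (S i)
      = c n * ∑' i : k ⁻¹' {n}, μ (S i) := by
        rw [← ENNReal.tsum_mul_left]
        exact tsum_congr fun i => by rw [show k i = n from i.2]
    _ ≤ c n * μ (⋃ i : k ⁻¹' {n}, S i) := by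
        gcongr
        exact tsum_meas_le_meas_iUnion_of_disjoint μ (fun i => hS i)
          (hd.comp_of_injective Subtype.val_injective)
    _ ≤ c n * μ (K n) := by
        gcongr
        refine iUnion_subset fun ⟨i, hi⟩ => ?_
        obtain rfl : k i = n := hi
        exact hK i

theorem closedBall_subset_closedBall_ceil_dist_add_one {X : Type*} [PseudoMetricSpace X]
    (x₀ x : X) {r : ℝ} (hr : r ≤ 1) :
    closedBall x r ⊆ closedBall x₀ (⌈dist x x₀⌉₊ + 1) :=
  closedBall_subset_closedBall' (by linarith [Nat.le_ceil (dist x x₀)])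

theorem tsum_mul_measure_le_of_pairwise_disjoint_shells {X ι : Type*} [PseudoMetricSpace X]
    [MeasurableSpace X] (μ : Measure X) (x₀ : X) {x : ι → X} {S : ι → Set X}
    (hS : ∀ i, MeasurableSet (S i)) (hd : Pairwise (Disjoint on S))
    (hSx : ∀ i, S i ⊆ closedBall (x i) 1) (c : ℕ → ℝ≥0∞) :
    ∑' i, c ⌈dist (x i) x₀⌉₊ * μ (S i) ≤ ∑' n : ℕ, c n * μ (closedBall x₀ (n + 1)) :=
  tsum_mul_measure_le_of_pairwise_disjoint μ hS hd (K := fun n : ℕ => closedBall x₀ (n + 1))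
    (fun i => (hSx i).trans (closedBall_subset_closedBall_ceil_dist_add_one x₀ (x i) le_rfl)) c

theorem IsLebesguePt.exists_radius_le_one {X Y : Type*} [NormedAddCommGroup X]
    [MeasurableSpace X] [NormedAddCommGroup Y] {μ : Measure X} {𝒮 : Set (X × Set X)}
    {g : X → Y} {a : X} {c : Y} (h : IsLebesguePt μ 𝒮 g a c) {η : ℝ} (hη : 0 < η) :
    ∃ R ∈ Ioc (0 : ℝ) 1, ∀ S : Set X, (a, S) ∈ 𝒮 → S ⊆ closedBall a R →
      ∫⁻ x in S, ‖g x - c‖₊ ∂μ ≤ ENNReal.ofReal η * μ S := by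
  obtain ⟨R, hR, hS⟩ := h η hη
  exact ⟨min R 1, ⟨lt_min hR one_pos, min_le_right _ _⟩,
    fun S hS𝒮 hSR => hS S hS𝒮 (hSR.trans (closedBall_subset_closedBall (min_le_left _ _)))⟩

theorem gauge_small_on_lebesgue_points_general
    {X Y : Type*} [NormedAddCommGroup X] [NormedSpace ℝ X] [FiniteDimensional ℝ X]
    [MeasurableSpace X]
    [NormedAddCommGroup Y]
    (μ : Measure X) [μ.Regular]
    (lam : ℝ)
    (𝒮 : Set (X × Set X)) (h𝒮 : IsAEMorseCover μ lam Set.univ 𝒮)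
    (f : X → Y)
    (L : Set X) (hL : L = {x : X | IsLebesguePt μ 𝒮 f x (f x)})
    (ε : ℝ) (hε : 0 < ε) :
    ∃ δ : X → ℝ, (∀ x ∈ L, δ x ∈ Set.Ioc (0:ℝ) 1) ∧
      ∀ (I : Set ℕ) (T : ℕ → X × Set X),
        (∀ i ∈ I, T i ∈ 𝒮 ∧ (T i).1 ∈ L ∧
          (T i).2 ⊆ Metric.closedBall (T i).1 (δ (T i).1)) →
        (∀ i ∈ I, ∀ j ∈ I, i ≠ j → Disjoint (T i).2 (T j).2) →
        (∑' i : I, ∫⁻ y in (T i).2, ‖f y - f (T i).1‖₊ ∂μ) < ENNReal.ofReal ε := by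
  obtain ⟨c, hc_pos, hc⟩ := ENNReal.exists_pos_tsum_mul_lt_of_countable
    (ENNReal.ofReal_pos.2 hε).ne' (fun n : ℕ => μ (closedBall 0 (n + 1)))
    fun _ => measure_closedBall_lt_top.ne
  have hradius : ∀ x, ∃ R ∈ Ioc (0 : ℝ) 1, x ∈ L → ∀ S, (x, S) ∈ 𝒮 → S ⊆ closedBall x R →
      ∫⁻ y in S, ‖f y - f x‖₊ ∂μ ≤ c ⌈dist x 0⌉₊ * μ S := by
    intro x
    by_cases hx : x ∈ L
    · rw [hL] at hx
      obtain ⟨R, hR, hS⟩ := hx.exists_radius_le_one (hc_pos ⌈dist x 0⌉₊)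
      exact ⟨R, hR, fun _ S hS𝒮 hSR => by simpa using hS S hS𝒮 hSR⟩
    · exact ⟨1, right_mem_Ioc.2 one_pos, fun h => absurd h hx⟩
  choose δ hδ hδL using hradius
  refine ⟨δ, fun x _ => hδ x, fun I T hT hdisj => ?_⟩
  calc ∑' i : I, ∫⁻ y in (T i).2, ‖f y - f (T i).1‖₊ ∂μ
      ≤ ∑' i : I, c ⌈dist (T i).1 0⌉₊ * μ (T i).2 :=
        ENNReal.tsum_le_tsum fun i => hδL _ (hT i i.2).2.1 _ (hT i i.2).1 (hT i i.2).2.2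
    _ ≤ ∑' n : ℕ, c n * μ (closedBall 0 (n + 1)) :=
        tsum_mul_measure_le_of_pairwise_disjoint_shells μ 0
          (x := fun i : I => (T i).1) (S := fun i : I => (T i).2)
          (fun i => (h𝒮.1.1 _ (hT i i.2).1).2.1)
          (fun i j hij => hdisj i i.2 j j.2 (Subtype.coe_ne_coe.2 hij))
          (fun i => (hT i i.2).2.2.trans (closedBall_subset_closedBall (hδ _).2)) _
    _ < ENNReal.ofReal ε := by simpa only [mul_comm] using hc

/-- Let `𝒮` be a `μ`-a.e. `λ`-Morse cover of `X`, `Y` a Banach space, `f : X → Y`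
`μ`-measurable with `‖f‖` `μ`-integrable, and let `L` be the set of Lebesgue points
`x` of `f` with respect to `f x`.  Given `ε > 0`, there is a gauge `δ : L → (0,1]`
such that for every finite or countably infinite pairwise disjoint sequence
`⟨S_i(x_i)⟩` of `δ`-fine sets from `𝒮` with tags `x_i ∈ L`, one has
`Σ_i ∫_{S_i} ‖f(y) − f(x_i)‖ dμ(y) < ε`. -/
theorem gauge_small_on_lebesgue_points
    {X Y : Type*} [NormedAddCommGroup X] [NormedSpace ℝ X] [FiniteDimensional ℝ X]
    [MeasurableSpace X] [OpensMeasurableSpace X]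
    [NormedAddCommGroup Y] [NormedSpace ℝ Y] [CompleteSpace Y]
    (μ : Measure X) [μ.Regular] [μ.IsComplete]
    (lam : ℝ) (hlam : 1 ≤ lam)
    (𝒮 : Set (X × Set X)) (h𝒮 : IsAEMorseCover μ lam Set.univ 𝒮)
    (f : X → Y) (hf : MuMeasurable μ f)
    (hint : Integrable (fun x => ‖f x‖) μ)
    (L : Set X) (hL : L = {x : X | IsLebesguePt μ 𝒮 f x (f x)})
    (ε : ℝ) (hε : 0 < ε) :
    ∃ δ : X → ℝ, (∀ x ∈ L, δ x ∈ Set.Ioc (0:ℝ) 1) ∧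
      ∀ (I : Set ℕ) (T : ℕ → X × Set X),
        (∀ i ∈ I, T i ∈ 𝒮 ∧ (T i).1 ∈ L ∧
          (T i).2 ⊆ Metric.closedBall (T i).1 (δ (T i).1)) →
        (∀ i ∈ I, ∀ j ∈ I, i ≠ j → Disjoint (T i).2 (T j).2) →
        (∑' i : I, ∫⁻ y in (T i).2, ‖f y - f (T i).1‖₊ ∂μ) < ENNReal.ofReal ε :=
  gauge_small_on_lebesgue_points_general μ lam 𝒮 h𝒮 f L hL ε hε
end
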